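/- arXiv:1702.02405 — 9 statements merged into one kernel-verified Lean document; each statement's English description precedes it below -/
import Mathlib

section
/- Let O be a consecutive matching in E that contains no run of ℓ+1 consecutive edges (i.e., every streak of O has at most ℓ edges), where ℓ ≥ 1, and let s ⊆ E be a run of ℓ consecutive edges. Then the number of edges of O that overlap some edge of s is at most 2ℓ + 2. -/
/-- Two edges `(i,j)` and `(i',j')` of the bipartite graph overlap if
`|i - i'| ≤ 1` or `|j - j'| ≤ 1`. -/
def Overlap {n : ℕ} (e e' : Fin n × Fin n) : Prop :=
  ((e.1.val : ℤ) - e'.1.val).natAbs ≤ 1 ∨ ((e.2.val : ℤ) - e'.2.val).natAbs ≤ 1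

instance {n : ℕ} (e e' : Fin n × Fin n) : Decidable (Overlap e e') := by
  unfold Overlap; infer_instance

/-- `M` is a consecutive matching in `E`. -/
def ConsecMatching {n : ℕ} (E M : Finset (Fin n × Fin n)) : Prop :=
  M ⊆ E ∧
  (∀ e ∈ M, ∀ e' ∈ M, e ≠ e' → e.1 ≠ e'.1 ∧ e.2 ≠ e'.2) ∧
  (∀ e ∈ M, ∀ e' ∈ M, e'.1.val = e.1.val + 1 → e'.2.val = e.2.val + 1) ∧
  (∀ e ∈ M, ∀ e' ∈ M, e'.2.val = e.2.val + 1 → e'.1.val = e.1.val + 1)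

/-- `s` is the run of `ℓ` consecutive edges at `(p, q)`,
i.e. `s = {(p+r, q+r) : 0 ≤ r < ℓ}`. -/
def IsRunAt {n : ℕ} (s : Finset (Fin n × Fin n)) (p q ℓ : ℕ) : Prop :=
  p + ℓ ≤ n ∧ q + ℓ ≤ n ∧
  ∀ e : Fin n × Fin n, e ∈ s ↔ ∃ r < ℓ, e.1.val = p + r ∧ e.2.val = q + r

/-- `s` is a run of `ℓ` consecutive edges. -/
def IsRun {n : ℕ} (s : Finset (Fin n × Fin n)) (ℓ : ℕ) : Prop :=
  ∃ p q, IsRunAt s p q ℓ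

/-- `E` contains no run of `k` consecutive edges. -/
def NoRun {n : ℕ} (E : Finset (Fin n × Fin n)) (k : ℕ) : Prop :=
  ¬ ∃ s : Finset (Fin n × Fin n), IsRun s k ∧ s ⊆ E

/-- `s` is a streak of `M`: a run of (at least one) consecutive edges contained in `M`,
maximal under inclusion among runs contained in `M`. -/
def IsStreak {n : ℕ} (M s : Finset (Fin n × Fin n)) : Prop :=
  (∃ ℓ, 1 ≤ ℓ ∧ IsRun s ℓ) ∧ s ⊆ M ∧
  ∀ s' ℓ', IsRun s' ℓ' → s' ⊆ M → s ⊆ s' → s' = s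

/-- `s 0, …, s (m-1)` is a greedy sequence in `E` with threshold `k`:
each `s i` is a run of at least `k` consecutive edges, all of whose edges
overlap no edge of the previously chosen runs, and no run of consecutive
edges all still available at step `i` is longer than `s i`. -/
def GreedySeq {n : ℕ} (E : Finset (Fin n × Fin n)) (k m : ℕ)
    (s : ℕ → Finset (Fin n × Fin n)) : Prop :=
  ∀ i < m,
    s i ⊆ E.filter (fun e => ∀ j < i, ∀ e' ∈ s j, ¬ Overlap e e') ∧
    (∃ ℓ, k ≤ ℓ ∧ IsRun (s i) ℓ) ∧
    (∀ r ℓ, IsRun r ℓ →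
      r ⊆ E.filter (fun e => ∀ j < i, ∀ e' ∈ s j, ¬ Overlap e e') →
      ℓ ≤ (s i).card)

/-- `M` is a `t`-locally-optimal consecutive matching in `E`. -/
def LocallyOptimal {n : ℕ} (E M : Finset (Fin n × Fin n)) (t : ℕ) : Prop :=
  ConsecMatching E M ∧
  ¬ ∃ Erem Eadd : Finset (Fin n × Fin n), Erem ⊆ M ∧ Eadd ⊆ E \ M ∧
      Erem.card < Eadd.card ∧ Eadd.card ≤ t ∧
      ConsecMatching E ((M \ Erem) ∪ Eadd)

/-! Every edge of `O` overlapping the run `s` at `(p, q)` of length `ℓ` has its first coordinate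
in the window `[p - 1, p + ℓ]` or its second coordinate in `[q - 1, q + ℓ]`, each of `ℓ + 2`
values. Since `O` is a matching, its edges have distinct first coordinates, and if they hit all of
`ℓ + 1` consecutive values the consecutiveness of `O` chains them into a run of `ℓ + 1` edges.
Hence each window carries at most `ℓ + 1` edges of `O`. The second window reduces to the first
by transposing the bipartite graph. -/

open Finset

variable {n : ℕ}

abbrev Finset.transpose (M : Finset (Fin n × Fin n)) : Finset (Fin n × Fin n) :=
  M.map (Equiv.prodComm _ _).toEmbedding

@[simp]
lemma Finset.mem_transpose {M : Finset (Fin n × Fin n)} {e : Fin n × Fin n} :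
    e ∈ M.transpose ↔ e.swap ∈ M := by
  simp [Finset.transpose, Finset.mem_map_equiv]

lemma Finset.card_filter_transpose (M : Finset (Fin n × Fin n)) (P : Fin n × Fin n → Prop)
    [DecidablePred P] : #(M.transpose.filter P) = #(M.filter (fun e => P e.swap)) := by
  rw [filter_map, card_map]
  rfl

lemma IsRunAt.transpose {s : Finset (Fin n × Fin n)} {p q ℓ : ℕ} (h : IsRunAt s p q ℓ) :
    IsRunAt s.transpose q p ℓ := by
  obtain ⟨hp, hq, hmem⟩ := h
  refine ⟨hq, hp, fun e => ?_⟩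
  rw [mem_transpose, hmem]
  simp only [Prod.fst_swap, Prod.snd_swap]
  exact exists_congr fun r => and_congr_right fun _ => and_comm

lemma NoRun.transpose {M : Finset (Fin n × Fin n)} {k : ℕ} (h : NoRun M k) :
    NoRun M.transpose k := by
  rintro ⟨s, ⟨p, q, hs⟩, hsM⟩
  refine h ⟨s.transpose, ⟨q, p, hs.transpose⟩, fun e he => ?_⟩
  simpa using hsM (mem_transpose.mp he)

lemma ConsecMatching.transpose {E M : Finset (Fin n × Fin n)} (h : ConsecMatching E M) :
    ConsecMatching E.transpose M.transpose := by
  obtain ⟨hME, hinj, hsucc₁, hsucc₂⟩ := h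
  refine ⟨fun e he => by simpa using hME (mem_transpose.mp he), ?_, ?_, ?_⟩
  · intro e he e' he' hne
    exact (hinj _ (mem_transpose.mp he) _ (mem_transpose.mp he')
      (fun h => hne (Prod.swap_injective h))).symm
  · intro e he e' he'
    exact hsucc₂ _ (mem_transpose.mp he) _ (mem_transpose.mp he')
  · intro e he e' he'
    exact hsucc₁ _ (mem_transpose.mp he) _ (mem_transpose.mp he')

lemma isRunAt_diagonal {p q ℓ : ℕ} (hp : p + ℓ ≤ n) (hq : q + ℓ ≤ n) :
    IsRunAt (univ.filter fun e : Fin n × Fin n => ∃ r < ℓ, e.1.val = p + r ∧ e.2.val = q + r)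
      p q ℓ :=
  ⟨hp, hq, fun e => by simp⟩

lemma exists_run_of_Icc_subset_image_fst {M : Finset (Fin n × Fin n)}
    (hsucc : ∀ e ∈ M, ∀ e' ∈ M, e'.1.val = e.1.val + 1 → e'.2.val = e.2.val + 1) {a k : ℕ}
    (hcov : Icc a (a + k) ⊆ M.image fun e => e.1.val) :
    ∃ s : Finset (Fin n × Fin n), IsRun s (k + 1) ∧ s ⊆ M := by
  have hcov' : ∀ v, a ≤ v → v ≤ a + k → ∃ e ∈ M, e.1.val = v := fun v h₁ h₂ => by
    simpa using hcov (mem_Icc.mpr ⟨h₁, h₂⟩)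
  obtain ⟨e₀, he₀, he₀₁⟩ := hcov' a le_rfl (Nat.le_add_right _ _)
  have hdiag : ∀ r ≤ k, ∃ e ∈ M, e.1.val = a + r ∧ e.2.val = e₀.2.val + r := by
    intro r hr
    induction r with
    | zero => exact ⟨e₀, he₀, by omega, rfl⟩
    | succ r ih =>
      obtain ⟨e, he, he₁, he₂⟩ := ih (by omega)
      obtain ⟨e', he', he'₁⟩ := hcov' (a + r + 1) (by omega) (by omega)
      have he'₂ := hsucc e he e' he' (by omega)
      exact ⟨e', he', by omega, by omega⟩
  obtain ⟨last, -, hlast₁, hlast₂⟩ := hdiag k le_rfl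
  refine ⟨_, ⟨a, e₀.2.val, isRunAt_diagonal (by omega) (by omega)⟩, fun e he => ?_⟩
  obtain ⟨r, hr, h₁, h₂⟩ := by simpa using he
  obtain ⟨e', he', h₁', h₂'⟩ := hdiag r (by omega)
  rwa [Prod.ext (Fin.ext (h₁.trans h₁'.symm)) (Fin.ext (h₂.trans h₂'.symm))]

lemma ConsecMatching.card_filter_fst_mem_Icc_le {E M : Finset (Fin n × Fin n)}
    (hM : ConsecMatching E M) {k : ℕ} (hno : NoRun M (k + 1)) (a : ℕ) :
    #(M.filter fun e => e.1.val ∈ Icc a (a + k + 1)) ≤ k + 1 := by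
  obtain ⟨-, hinj, hsucc, -⟩ := hM
  set W := M.filter fun e => e.1.val ∈ Icc a (a + k + 1)
  obtain ⟨v, hv, hvW⟩ : ∃ v ∈ Icc a (a + k), v ∉ W.image fun e => e.1.val := by
    by_contra! hcov
    refine hno (exists_run_of_Icc_subset_image_fst hsucc (a := a) fun v hv => ?_)
    exact image_subset_image (filter_subset _ M) (hcov v hv)
  have hinjW : Set.InjOn (fun e : Fin n × Fin n => e.1.val) W := fun e he e' he' h => by
    by_contra hne
    exact (hinj e (mem_filter.mp he).1 e' (mem_filter.mp he').1 hne).1 (Fin.ext h)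
  have himg : W.image (fun e => e.1.val) ⊆ (Icc a (a + k + 1)).erase v := fun w hw => by
    obtain ⟨e, he, rfl⟩ := mem_image.mp hw
    exact mem_erase.mpr ⟨fun h => hvW (h ▸ hw), (mem_filter.mp he).2⟩
  have hv' : v ∈ Icc a (a + k + 1) := Icc_subset_Icc_right (by omega) hv
  calc #W = #(W.image fun e => e.1.val) := (card_image_of_injOn hinjW).symm
    _ ≤ #((Icc a (a + k + 1)).erase v) := card_le_card himg
    _ = k + 1 := by rw [card_erase_of_mem hv', Nat.card_Icc]; omega

lemma ConsecMatching.card_filter_snd_mem_Icc_le {E M : Finset (Fin n × Fin n)}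
    (hM : ConsecMatching E M) {k : ℕ} (hno : NoRun M (k + 1)) (a : ℕ) :
    #(M.filter fun e => e.2.val ∈ Icc a (a + k + 1)) ≤ k + 1 := by
  simpa [card_filter_transpose] using
    hM.transpose.card_filter_fst_mem_Icc_le hno.transpose a

-- For `p = 0` the truncated `p - 1` makes this the window `[0, ℓ + 1]`, still of `ℓ + 2` values.
lemma IsRunAt.mem_Icc_of_overlap {s : Finset (Fin n × Fin n)} {p q ℓ : ℕ}
    (hs : IsRunAt s p q ℓ) {e e' : Fin n × Fin n} (he' : e' ∈ s) (hov : Overlap e e') :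
    e.1.val ∈ Icc (p - 1) (p - 1 + ℓ + 1) ∨ e.2.val ∈ Icc (q - 1) (q - 1 + ℓ + 1) := by
  obtain ⟨r, hr, h₁, h₂⟩ := (hs.2.2 e').mp he'
  simp only [Overlap] at hov
  simp only [mem_Icc]
  omega

theorem greedy_step_bound_general {n : ℕ} (E O s : Finset (Fin n × Fin n))
    (ℓ : ℕ)
    (hO : ConsecMatching E O) (hnorun : NoRun O (ℓ + 1))
    (hs : IsRun s ℓ) :
    (O.filter (fun e => ∃ e' ∈ s, Overlap e e')).card ≤ 2 * ℓ + 2 := by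
  obtain ⟨p, q, hs⟩ := hs
  have hsub : O.filter (fun e => ∃ e' ∈ s, Overlap e e') ⊆
      O.filter (fun e => e.1.val ∈ Icc (p - 1) (p - 1 + ℓ + 1)) ∪
        O.filter (fun e => e.2.val ∈ Icc (q - 1) (q - 1 + ℓ + 1)) := by
    intro e he
    obtain ⟨heO, e', he', hov⟩ := mem_filter.mp he
    rcases hs.mem_Icc_of_overlap he' hov with h | h
    · exact mem_union_left _ (mem_filter.mpr ⟨heO, h⟩)
    · exact mem_union_right _ (mem_filter.mpr ⟨heO, h⟩)
  calc _ ≤ _ := card_le_card hsub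
    _ ≤ _ := card_union_le _ _
    _ ≤ (ℓ + 1) + (ℓ + 1) := add_le_add (hO.card_filter_fst_mem_Icc_le hnorun _)
        (hO.card_filter_snd_mem_Icc_le hnorun _)
    _ = 2 * ℓ + 2 := by ring

/-- if the consecutive matching `O` in `E` contains no run of `ℓ+1`
consecutive edges and `s ⊆ E` is a run of `ℓ` consecutive edges, then at most
`2ℓ + 2` edges of `O` overlap some edge of `s`. -/
theorem greedy_step_bound {n : ℕ} (hn : 1 ≤ n) (E O s : Finset (Fin n × Fin n))
    (ℓ : ℕ) (hℓ : 1 ≤ ℓ)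
    (hO : ConsecMatching E O) (hnorun : NoRun O (ℓ + 1))
    (hs : IsRun s ℓ) (hsE : s ⊆ E) :
    (O.filter (fun e => ∃ e' ∈ s, Overlap e e')).card ≤ 2 * ℓ + 2 :=
  greedy_step_bound_general E O s ℓ hO hnorun hs
end

section
/- Let O be a consecutive matching in E that contains no run of ℓ+1 consecutive edges, where ℓ ≥ 1, and let I be a set of at most ℓ+2 consecutive indices on side A. Then the number of edges (i,j) ∈ O with i ∈ I is at most ℓ + 1. -/
/-! Assume more than `ℓ + 1` edges of `O` start in `I`. Distinct edges of a matching start at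
distinct indices, and `I` has at most `ℓ + 2` of them, so every index `a, …, a + ℓ` is the
A-endpoint of an edge of `O`. Consecutiveness forces these edges to form a run of `ℓ + 1`
edges. -/

namespace ConsecMatching

variable {n : ℕ} {E O : Finset (Fin n × Fin n)}

lemma injOn_fst_val (hO : ConsecMatching E O) :
    Set.InjOn (fun e : Fin n × Fin n => e.1.val) O := by
  intro e he e' he' h
  by_contra hne
  exact (hO.2.1 e he e' he' hne).1 (Fin.ext h)

lemma snd_val_eq_add_of_fst_val_eq_add (hO : ConsecMatching E O) {f : ℕ → Fin n × Fin n}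
    {a k : ℕ} (hfO : ∀ r < k, f r ∈ O) (hf : ∀ r < k, (f r).1.val = a + r) :
    ∀ r < k, (f r).2.val = (f 0).2.val + r := by
  intro r
  induction r with
  | zero => simp
  | succ r ih =>
    intro hr
    have hstep : (f (r + 1)).2.val = (f r).2.val + 1 :=
      hO.2.2.1 _ (hfO r (by omega)) _ (hfO (r + 1) hr) (by rw [hf r (by omega), hf _ hr]; omega)
    rw [hstep, ih (by omega)]
    omega

lemma exists_run_of_forall_exists_fst_val (hO : ConsecMatching E O) {a k : ℕ}
    (hcover : ∀ r < k, ∃ e ∈ O, e.1.val = a + r) :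
    ∃ s, IsRun s k ∧ s ⊆ O := by
  rcases Nat.eq_zero_or_pos k with rfl | hk
  · exact ⟨∅, ⟨0, 0, by simp [IsRunAt]⟩, Finset.empty_subset _⟩
  obtain ⟨e₀, -, -⟩ := hcover 0 hk
  have : Nonempty (Fin n × Fin n) := ⟨e₀⟩
  choose! f hfO hf using hcover
  have hsnd := hO.snd_val_eq_add_of_fst_val_eq_add hfO hf
  refine ⟨(Finset.range k).image f, ⟨a, (f 0).2.val, ?_, ?_, fun e => ?_⟩, ?_⟩
  · have := (f (k - 1)).1.isLt
    have := hf (k - 1) (by omega)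
    omega
  · have := (f (k - 1)).2.isLt
    have := hsnd (k - 1) (by omega)
    omega
  · simp only [Finset.mem_image, Finset.mem_range]
    constructor
    · rintro ⟨r, hr, rfl⟩
      exact ⟨r, hr, hf r hr, hsnd r hr⟩
    · rintro ⟨r, hr, h1, h2⟩
      exact ⟨r, hr, Prod.ext (Fin.ext (by rw [hf r hr, h1])) (Fin.ext (by rw [hsnd r hr, h2]))⟩
  · simp only [Finset.image_subset_iff, Finset.mem_range]
    exact hfO

end ConsecMatching

theorem side_window_bound_general {n : ℕ} (E O : Finset (Fin n × Fin n))
    (ℓ : ℕ)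
    (hO : ConsecMatching E O) (hnorun : NoRun O (ℓ + 1))
    (I : Finset (Fin n)) (a w : ℕ) (hw : w ≤ ℓ + 2)
    (hI : ∀ v : Fin n, v ∈ I ↔ a ≤ v.val ∧ v.val < a + w) :
    (O.filter (fun e => e.1 ∈ I)).card ≤ ℓ + 1 := by
  set F := O.filter (fun e => e.1 ∈ I)
  have hFO : F ⊆ O := Finset.filter_subset _ _
  have hsub : F.image (fun e => e.1.val) ⊆ Finset.Ico a (a + w) := by
    simp only [Finset.image_subset_iff, Finset.mem_Ico]
    exact fun e he => (hI e.1).1 (Finset.mem_filter.1 he).2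
  have hcard : (F.image (fun e => e.1.val)).card = F.card :=
    Finset.card_image_of_injOn (hO.injOn_fst_val.mono hFO)
  by_contra! hbig
  have hw' : ℓ + 1 < w :=
    calc ℓ + 1 < F.card := hbig
      _ = (F.image (fun e => e.1.val)).card := hcard.symm
      _ ≤ (Finset.Ico a (a + w)).card := Finset.card_le_card hsub
      _ = w := by rw [Nat.card_Ico, Nat.add_sub_cancel_left]
  have hfull : F.image (fun e => e.1.val) = Finset.Ico a (a + w) :=
    Finset.eq_of_subset_of_card_le hsub (by rw [Nat.card_Ico, hcard]; omega)
  refine hnorun (hO.exists_run_of_forall_exists_fst_val (a := a) fun r hr => ?_)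
  have hr' : a + r ∈ F.image (fun e => e.1.val) := by
    rw [hfull, Finset.mem_Ico]; omega
  obtain ⟨e, he, hval⟩ := Finset.mem_image.1 hr'
  exact ⟨e, hFO he, hval⟩

/-- if the consecutive matching `O` in `E` contains no run of `ℓ+1`
consecutive edges and `I` is a set of at most `ℓ+2` consecutive indices on side A,
then at most `ℓ + 1` edges of `O` have their A-endpoint in `I`. -/
theorem side_window_bound {n : ℕ} (hn : 1 ≤ n) (E O : Finset (Fin n × Fin n))
    (ℓ : ℕ) (hℓ : 1 ≤ ℓ)
    (hO : ConsecMatching E O) (hnorun : NoRun O (ℓ + 1))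
    (I : Finset (Fin n)) (a w : ℕ) (hw : w ≤ ℓ + 2)
    (hI : ∀ v : Fin n, v ∈ I ↔ a ≤ v.val ∧ v.val < a + w) :
    (O.filter (fun e => e.1 ∈ I)).card ≤ ℓ + 1 :=
  side_window_bound_general E O ℓ hO hnorun I a w hw hI
end

section
/- Let s_1, …, s_m form a greedy sequence in E with threshold k, where k ≥ 1, and let O be any consecutive matching in E. Then k times the number of edges of O that overlap some edge of s_1 ∪ … ∪ s_m is at most (2k + 2) · (|s_1| + … + |s_m|); equivalently, the number of such edges of O is at most (2 + 2/k) · (|s_1| + … + |s_m|). -/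
/-!
Charge every edge of `O` that overlaps the greedy runs to the first run `s i` it overlaps.
The edges charged to `s i` were still available when `s i` was chosen, and each of them
has its row or its column index in a window of `ℓ + 2` consecutive indices around the
`ℓ = |s i|` rows or columns of `s i`. A consecutive matching filling such a window would be
a run of `ℓ + 2` available edges, longer than the greedy choice `s i`; so at most `ℓ + 1`
edges are charged per window, `2ℓ + 2` in all, and `k (2ℓ + 2) ≤ (2k + 2) ℓ` as `k ≤ ℓ`.
-/

open Finset

theorem Finset.card_filter_exists_lt_le_sum_card_filter_first {α : Type*} (t : Finset α)
    (P : ℕ → α → Prop) [∀ i, DecidablePred (P i)] (m : ℕ) :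
    (t.filter fun a => ∃ i < m, P i a).card ≤
      ∑ i ∈ range m, (t.filter fun a => P i a ∧ ∀ j < i, ¬ P j a).card := by
  classical
  calc _ ≤ ((range m).biUnion fun i => t.filter fun a => P i a ∧ ∀ j < i, ¬ P j a).card := by
        refine card_le_card fun a ha => ?_
        obtain ⟨hat, hex⟩ := mem_filter.1 ha
        obtain ⟨hlt, hP⟩ := Nat.find_spec hex
        exact mem_biUnion.2 ⟨Nat.find hex, mem_range.2 hlt, mem_filter.2
          ⟨hat, hP, fun j hj hPj => Nat.find_min hex hj ⟨hj.trans hlt, hPj⟩⟩⟩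
    _ ≤ _ := card_biUnion_le

theorem Finset.mem_image_swap {α β : Type*} [DecidableEq (β × α)] {t : Finset (α × β)}
    {e : β × α} : e ∈ t.image Prod.swap ↔ e.swap ∈ t := by
  simp [Prod.swap_eq_iff_eq_swap]

section Runs

variable {n : ℕ}

theorem IsRunAt.card_eq {s : Finset (Fin n × Fin n)} {p q ℓ : ℕ} (h : IsRunAt s p q ℓ) :
    s.card = ℓ := by
  obtain ⟨hp, hq, hmem⟩ := h
  have himg : s.image (fun e => e.1.val) = Ico p (p + ℓ) := by
    ext a
    simp only [mem_image, mem_Ico]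
    constructor
    · rintro ⟨e, he, rfl⟩
      obtain ⟨r, hr, h1, -⟩ := (hmem e).1 he
      omega
    · rintro ⟨h1, h2⟩
      exact ⟨(⟨a, by omega⟩, ⟨q + (a - p), by omega⟩),
        (hmem _).2 ⟨a - p, by omega, by simp only; omega, rfl⟩, rfl⟩
  have hinj : Set.InjOn (fun e : Fin n × Fin n => e.1.val) s := fun e he e' he' hee' => by
    obtain ⟨r, -, h1, h2⟩ := (hmem e).1 he
    obtain ⟨r', -, h1', h2'⟩ := (hmem e').1 he'
    simp only at hee'
    exact Prod.ext (Fin.ext (by omega)) (Fin.ext (by omega))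
  rw [← card_image_of_injOn hinj, himg, Nat.card_Ico]
  omega

theorem IsRunAt.image_swap {s : Finset (Fin n × Fin n)} {p q ℓ : ℕ} (h : IsRunAt s p q ℓ) :
    IsRunAt (s.image Prod.swap) q p ℓ := by
  obtain ⟨hp, hq, hmem⟩ := h
  refine ⟨hq, hp, fun e => ?_⟩
  rw [mem_image_swap, hmem]
  exact exists_congr fun r => and_congr_right fun _ => and_comm

theorem NoRun.mono {A B : Finset (Fin n × Fin n)} {L : ℕ} (h : NoRun A L) (hBA : B ⊆ A) :
    NoRun B L :=
  fun ⟨r, hr, hrB⟩ => h ⟨r, hr, hrB.trans hBA⟩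

theorem NoRun.image_swap {A : Finset (Fin n × Fin n)} {L : ℕ} (h : NoRun A L) :
    NoRun (A.image Prod.swap) L := by
  rintro ⟨r, ⟨p, q, hr⟩, hrA⟩
  refine h ⟨r.image Prod.swap, ⟨q, p, hr.image_swap⟩, fun e he => ?_⟩
  simpa using mem_image_swap.1 (hrA (mem_image_swap.1 he))

end Runs

namespace ConsecMatching

variable {n : ℕ} {E M : Finset (Fin n × Fin n)}

theorem mono (hM : ConsecMatching E M) {M' : Finset (Fin n × Fin n)} (hM' : M' ⊆ M) :
    ConsecMatching E M' := by
  obtain ⟨hME, hdist, hfst, hsnd⟩ := hM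
  exact ⟨hM'.trans hME, fun e he e' he' => hdist e (hM' he) e' (hM' he'),
    fun e he e' he' => hfst e (hM' he) e' (hM' he'),
    fun e he e' he' => hsnd e (hM' he) e' (hM' he')⟩

theorem image_swap (hM : ConsecMatching E M) :
    ConsecMatching (E.image Prod.swap) (M.image Prod.swap) := by
  obtain ⟨hME, hdist, hfst, hsnd⟩ := hM
  refine ⟨image_subset_image hME, fun e he e' he' hne => ?_, fun e he e' he' => ?_,
    fun e he e' he' => ?_⟩ <;> rw [mem_image_swap] at he he'
  · exact (hdist _ he _ he' (Prod.swap_injective.ne hne)).symm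
  · exact hsnd _ he _ he'
  · exact hfst _ he _ he'

theorem fst_val_injOn (hM : ConsecMatching E M) :
    Set.InjOn (fun e : Fin n × Fin n => e.1.val) M := fun e he e' he' h => by
  by_contra hne
  exact (hM.2.1 e he e' he' hne).1 (Fin.ext h)

theorem isRun_of_fst_mem_Ico (hM : ConsecMatching E M) {a : ℕ}
    (hwin : ∀ e ∈ M, e.1.val ∈ Ico a (a + M.card)) : IsRun M M.card := by
  rcases M.eq_empty_or_nonempty with rfl | hne
  · exact ⟨0, 0, by simp, by simp, by simp⟩
  have himg : M.image (fun e => e.1.val) = Ico a (a + M.card) :=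
    eq_of_subset_of_card_le (image_subset_iff.2 hwin)
      (by rw [card_image_of_injOn hM.fst_val_injOn, Nat.card_Ico]; omega)
  have hrow : ∀ r < M.card, ∃ e ∈ M, e.1.val = a + r := fun r hr => by
    have : a + r ∈ M.image (fun e => e.1.val) := himg ▸ mem_Ico.2 ⟨by omega, by omega⟩
    simpa only [mem_image] using this
  have hpos := hne.card_pos
  obtain ⟨e₀, he₀, he₀a⟩ := hrow 0 hpos
  have hdiag : ∀ r, ∀ e ∈ M, e.1.val = a + r → e.2.val = e₀.2.val + r := by
    intro r
    induction r with
    | zero =>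
      intro e he h
      have : e = e₀ := hM.fst_val_injOn he he₀ (by simp only; omega)
      rw [this]; rfl
    | succ r ih =>
      intro e he h
      have := mem_Ico.1 (hwin e he)
      obtain ⟨e', he', he'a⟩ := hrow r (by omega)
      have := hM.2.2.1 e' he' e he (by omega)
      have := ih e' he' he'a
      omega
  obtain ⟨e₁, he₁, he₁a⟩ := hrow (M.card - 1) (by omega)
  have := hdiag _ e₁ he₁ he₁a
  refine ⟨a, e₀.2.val, by have := e₁.1.isLt; omega,
    by have := e₁.2.isLt; omega,
    fun e => ⟨fun he => ?_, ?_⟩⟩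
  · have := mem_Ico.1 (hwin e he)
    have := hdiag (e.1.val - a) e he (by omega)
    exact ⟨e.1.val - a, by omega, by omega, by omega⟩
  · rintro ⟨r, hr, h1, h2⟩
    obtain ⟨e', he', he'a⟩ := hrow r hr
    have := hdiag r e' he' he'a
    have : e = e' := Prod.ext (Fin.ext (by omega)) (Fin.ext (by omega))
    exact this ▸ he'

theorem card_lt_of_fst_mem_Ico (hM : ConsecMatching E M) {a L : ℕ}
    (hwin : ∀ e ∈ M, e.1.val ∈ Ico a (a + L)) (hno : NoRun M L) : M.card < L := by
  have hle : M.card ≤ L :=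
    calc M.card = (M.image fun e => e.1.val).card :=
          (card_image_of_injOn hM.fst_val_injOn).symm
      _ ≤ (Ico a (a + L)).card := card_le_card (image_subset_iff.2 hwin)
      _ = L := by simp
  refine hle.lt_of_ne fun hL => hno ⟨M, ?_, subset_rfl⟩
  rw [← hL] at hwin ⊢
  exact hM.isRun_of_fst_mem_Ico hwin

theorem card_lt_of_snd_mem_Ico (hM : ConsecMatching E M) {a L : ℕ}
    (hwin : ∀ e ∈ M, e.2.val ∈ Ico a (a + L)) (hno : NoRun M L) : M.card < L := by
  have := hM.image_swap.card_lt_of_fst_mem_Ico (fun e he => hwin e.swap (mem_image_swap.1 he))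
    hno.image_swap
  rwa [card_image_of_injective _ Prod.swap_injective] at this

theorem card_le_of_overlap_runAt (hM : ConsecMatching E M) {s : Finset (Fin n × Fin n)}
    {p q ℓ : ℕ} (hs : IsRunAt s p q ℓ) (hov : ∀ e ∈ M, ∃ e' ∈ s, Overlap e e')
    (hno : NoRun M (ℓ + 2)) : M.card ≤ 2 * ℓ + 2 := by
  let rowNear : Fin n × Fin n → Prop := fun e => e.1.val ∈ Ico (p - 1) (p - 1 + (ℓ + 2))
  have hrow : (M.filter rowNear).card < ℓ + 2 :=
    (hM.mono (filter_subset _ _)).card_lt_of_fst_mem_Ico (fun e he => (mem_filter.1 he).2)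
      (hno.mono (filter_subset _ _))
  have hcol : (M.filter fun e => ¬ rowNear e).card < ℓ + 2 := by
    refine (hM.mono (filter_subset _ _)).card_lt_of_snd_mem_Ico (a := q - 1)
      (fun e he => ?_) (hno.mono (filter_subset _ _))
    obtain ⟨he, hfar⟩ := mem_filter.1 he
    obtain ⟨e', he', hee'⟩ := hov e he
    obtain ⟨r, hr, h1, h2⟩ := (hs.2.2 e').1 he'
    simp only [rowNear, mem_Ico] at hfar ⊢
    unfold Overlap at hee'
    omega
  have := card_filter_add_card_filter_not (s := M) rowNear
  omega

end ConsecMatching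

/-- The set `E_i` of the greedy construction. -/
def availableEdges {n : ℕ} (E : Finset (Fin n × Fin n)) (s : ℕ → Finset (Fin n × Fin n))
    (i : ℕ) : Finset (Fin n × Fin n) :=
  E.filter fun e => ∀ j < i, ∀ e' ∈ s j, ¬ Overlap e e'

namespace GreedySeq

variable {n : ℕ} {E : Finset (Fin n × Fin n)} {k m : ℕ} {s : ℕ → Finset (Fin n × Fin n)}

theorem noRun_availableEdges (h : GreedySeq E k m s) {i L : ℕ} (hi : i < m)
    (hL : (s i).card < L) : NoRun (availableEdges E s i) L :=
  fun ⟨r, hr, hrE⟩ => hL.not_ge ((h i hi).2.2 r L hr hrE)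

theorem mul_card_first_overlaps_le (h : GreedySeq E k m s) {O : Finset (Fin n × Fin n)}
    (hO : ConsecMatching E O) {i : ℕ} (hi : i < m) :
    k * (O.filter fun e =>
        (∃ e' ∈ s i, Overlap e e') ∧ ∀ j < i, ¬ ∃ e' ∈ s j, Overlap e e').card ≤
      (2 * k + 2) * (s i).card := by
  obtain ⟨-, ⟨ℓ, hkℓ, p, q, hrun⟩, -⟩ := h i hi
  set Y := O.filter fun e => (∃ e' ∈ s i, Overlap e e') ∧ ∀ j < i, ¬ ∃ e' ∈ s j, Overlap e e'
  have hYavail : Y ⊆ availableEdges E s i := fun e he => by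
    obtain ⟨heO, -, hfirst⟩ := mem_filter.1 he
    exact mem_filter.2 ⟨hO.1 heO, fun j hj e' he' hov => hfirst j hj ⟨e', he', hov⟩⟩
  have hY : Y.card ≤ 2 * ℓ + 2 :=
    (hO.mono (filter_subset _ _)).card_le_of_overlap_runAt hrun
      (fun e he => (mem_filter.1 he).2.1)
      ((h.noRun_availableEdges hi (by rw [hrun.card_eq]; omega)).mono hYavail)
  rw [hrun.card_eq]
  nlinarith

end GreedySeq

theorem greedy_ratio_general {n : ℕ} (E : Finset (Fin n × Fin n))
    (k m : ℕ)
    (s : ℕ → Finset (Fin n × Fin n)) (hgreedy : GreedySeq E k m s)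
    (O : Finset (Fin n × Fin n)) (hO : ConsecMatching E O) :
    k * (O.filter (fun e => ∃ i < m, ∃ e' ∈ s i, Overlap e e')).card
      ≤ (2 * k + 2) * ∑ i ∈ Finset.range m, (s i).card := by
  calc _ ≤ k * ∑ i ∈ range m, (O.filter fun e =>
          (∃ e' ∈ s i, Overlap e e') ∧ ∀ j < i, ¬ ∃ e' ∈ s j, Overlap e e').card :=
        Nat.mul_le_mul_left k (card_filter_exists_lt_le_sum_card_filter_first O _ m)
    _ ≤ ∑ i ∈ range m, (2 * k + 2) * (s i).card := by
        rw [mul_sum]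
        exact sum_le_sum fun i hi => hgreedy.mul_card_first_overlaps_le hO (mem_range.1 hi)
    _ = _ := (mul_sum _ _ _).symm

/-- for a greedy sequence `s 0, …, s (m-1)` in `E` with threshold `k`
and any consecutive matching `O` in `E`, the number of edges of `O` overlapping
some edge of `⋃ᵢ s i` is at most `(2 + 2/k)` times `∑ᵢ |s i|`. -/
theorem greedy_ratio {n : ℕ} (hn : 1 ≤ n) (E : Finset (Fin n × Fin n))
    (k m : ℕ) (hk : 1 ≤ k)
    (s : ℕ → Finset (Fin n × Fin n)) (hgreedy : GreedySeq E k m s)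
    (O : Finset (Fin n × Fin n)) (hO : ConsecMatching E O) :
    k * (O.filter (fun e => ∃ i < m, ∃ e' ∈ s i, Overlap e e')).card
      ≤ (2 * k + 2) * ∑ i ∈ Finset.range m, (s i).card :=
  greedy_ratio_general E k m s hgreedy O hO
end

section
/- Let M be a consecutive matching in E and let (i,j) and (i',j') be two distinct edges of M that overlap. Then |i − i'| = 1 and, as integers, j' − j = i' − i. In particular, any two distinct overlapping edges of a consecutive matching are consecutive edges of a common run. -/
namespace ConsecMatching

variable {n : ℕ} {E M : Finset (Fin n × Fin n)} {e e' : Fin n × Fin n}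

theorem fst_val_ne (hM : ConsecMatching E M) (he : e ∈ M) (he' : e' ∈ M) (hne : e ≠ e') :
    e.1.val ≠ e'.1.val :=
  Fin.val_ne_of_ne (hM.2.1 e he e' he' hne).1

theorem snd_val_ne (hM : ConsecMatching E M) (he : e ∈ M) (he' : e' ∈ M) (hne : e ≠ e') :
    e.2.val ≠ e'.2.val :=
  Fin.val_ne_of_ne (hM.2.1 e he e' he' hne).2

theorem snd_val_succ_of_fst_val_succ (hM : ConsecMatching E M) (he : e ∈ M) (he' : e' ∈ M)
    (h : e'.1.val = e.1.val + 1) : e'.2.val = e.2.val + 1 :=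
  hM.2.2.1 e he e' he' h

theorem fst_val_succ_of_snd_val_succ (hM : ConsecMatching E M) (he : e ∈ M) (he' : e' ∈ M)
    (h : e'.2.val = e.2.val + 1) : e'.1.val = e.1.val + 1 :=
  hM.2.2.2 e he e' he' h

/-- Distinct edges of a consecutive matching differ in both coordinates, so an overlap
forces a difference of exactly one in some coordinate, and the run conditions propagate it
to the other coordinate. -/
theorem succ_or_succ_of_overlap (hM : ConsecMatching E M) (he : e ∈ M) (he' : e' ∈ M)
    (hne : e ≠ e') (hov : Overlap e e') :
    (e'.1.val = e.1.val + 1 ∧ e'.2.val = e.2.val + 1) ∨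
      (e.1.val = e'.1.val + 1 ∧ e.2.val = e'.2.val + 1) := by
  have hfst := hM.fst_val_ne he he' hne
  have hsnd := hM.snd_val_ne he he' hne
  have hadj : e'.1.val = e.1.val + 1 ∨ e.1.val = e'.1.val + 1 := by
    rcases hov with h | h
    · omega
    · obtain h | h : e'.2.val = e.2.val + 1 ∨ e.2.val = e'.2.val + 1 := by omega
      · exact .inl (hM.fst_val_succ_of_snd_val_succ he he' h)
      · exact .inr (hM.fst_val_succ_of_snd_val_succ he' he h)
  rcases hadj with h | h
  · exact .inl ⟨h, hM.snd_val_succ_of_fst_val_succ he he' h⟩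
  · exact .inr ⟨h, hM.snd_val_succ_of_fst_val_succ he' he h⟩

end ConsecMatching

theorem overlapping_edges_consecutive_general {n : ℕ}
    (E M : Finset (Fin n × Fin n)) (hM : ConsecMatching E M)
    (e e' : Fin n × Fin n) (he : e ∈ M) (he' : e' ∈ M) (hne : e ≠ e')
    (hov : Overlap e e') :
    ((e.1.val : ℤ) - e'.1.val).natAbs = 1 ∧
    (e'.2.val : ℤ) - e.2.val = (e'.1.val : ℤ) - e.1.val := by
  rcases hM.succ_or_succ_of_overlap he he' hne hov with ⟨h1, h2⟩ | ⟨h1, h2⟩ <;> omega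

/-- two distinct overlapping edges of a consecutive matching satisfy
`|i - i'| = 1` and `j' - j = i' - i` (as integers), i.e. they are consecutive
edges of a common run. -/
theorem overlapping_edges_consecutive {n : ℕ} (hn : 1 ≤ n)
    (E M : Finset (Fin n × Fin n)) (hM : ConsecMatching E M)
    (e e' : Fin n × Fin n) (he : e ∈ M) (he' : e' ∈ M) (hne : e ≠ e')
    (hov : Overlap e e') :
    ((e.1.val : ℤ) - e'.1.val).natAbs = 1 ∧
    (e'.2.val : ℤ) - e.2.val = (e'.1.val : ℤ) - e.1.val :=
  overlapping_edges_consecutive_general E M hM e e' he he' hne hov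
end

section
/- Every consecutive matching M in E can be partitioned, in a unique way, into runs of consecutive edges such that any two distinct parts of the partition do not overlap (no edge of one part overlaps an edge of another part). -/
/-! A consecutive matching splits into its maximal runs: two edges of a consecutive matching
overlap only if they are equal or diagonal neighbours `(i, j)`, `(i+1, j+1)`, so a maximal run
overlaps nothing else in the matching. Conversely, each part of a non-overlapping partition is
closed under overlap inside the matching, while consecutive edges of a run overlap; hence a run
inside the matching that meets a part lies in it, and two such partitions have the same parts. -/

section

variable {n : ℕ}

def IsRunPartition (M : Finset (Fin n × Fin n)) (P : Finset (Finset (Fin n × Fin n))) : Prop :=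
  (∀ t ∈ P, ∃ ℓ, 1 ≤ ℓ ∧ IsRun t ℓ) ∧
  P.biUnion id = M ∧
  (∀ t ∈ P, ∀ t' ∈ P, t ≠ t' → ∀ e ∈ t, ∀ e' ∈ t', ¬ Overlap e e')

theorem Overlap.symm {e e' : Fin n × Fin n} (h : Overlap e e') : Overlap e' e := by
  unfold Overlap at *; omega

theorem ConsecMatching.mono_s4 {E M M' : Finset (Fin n × Fin n)} (hM : ConsecMatching E M)
    (h : M' ⊆ M) : ConsecMatching E M' := by
  obtain ⟨hME, hdist, hsucc₁, hsucc₂⟩ := hM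
  exact ⟨h.trans hME, fun e he e' he' => hdist e (h he) e' (h he'),
    fun e he e' he' => hsucc₁ e (h he) e' (h he'),
    fun e he e' he' => hsucc₂ e (h he) e' (h he')⟩

theorem ConsecMatching.eq_or_diag_adj_of_overlap {E M : Finset (Fin n × Fin n)}
    (hM : ConsecMatching E M) {f g : Fin n × Fin n} (hf : f ∈ M) (hg : g ∈ M)
    (h : Overlap f g) :
    f = g ∨ (g.1.val = f.1.val + 1 ∧ g.2.val = f.2.val + 1) ∨
      (f.1.val = g.1.val + 1 ∧ f.2.val = g.2.val + 1) := by
  obtain ⟨-, hdist, hsucc₁, hsucc₂⟩ := hM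
  by_cases hfg : f = g
  · exact Or.inl hfg
  obtain ⟨h₁, h₂⟩ := hdist f hf g hg hfg
  rw [Ne, Fin.ext_iff] at h₁ h₂
  unfold Overlap at h
  have := hsucc₁ f hf g hg
  have := hsucc₁ g hg f hf
  have := hsucc₂ f hf g hg
  have := hsucc₂ g hg f hf
  omega

theorem IsRunAt.exists_mem {s : Finset (Fin n × Fin n)} {p q ℓ r : ℕ} (hs : IsRunAt s p q ℓ)
    (hr : r < ℓ) : ∃ f ∈ s, f.1.val = p + r ∧ f.2.val = q + r := by
  obtain ⟨hp, hq, hmem⟩ := hs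
  exact ⟨(⟨p + r, by omega⟩, ⟨q + r, by omega⟩), (hmem _).2 ⟨r, hr, rfl, rfl⟩, rfl, rfl⟩

theorem Nat.iff_of_forall_succ_iff {S : ℕ → Prop} {ℓ a b : ℕ}
    (hS : ∀ r, r + 1 < ℓ → (S r ↔ S (r + 1))) (ha : a < ℓ) (hb : b < ℓ) : S a ↔ S b := by
  have hS₀ : ∀ r < ℓ, (S r ↔ S 0) := by
    intro r
    induction r with
    | zero => simp
    | succ r ih => intro hr; rw [← hS r hr, ih (by omega)]
  rw [hS₀ a ha, hS₀ b hb]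

theorem IsRunAt.subset_of_overlap_closed {s u : Finset (Fin n × Fin n)} {p q ℓ : ℕ}
    (hs : IsRunAt s p q ℓ) (hu : ∀ f ∈ s, ∀ g ∈ s, Overlap f g → f ∈ u → g ∈ u)
    {e : Fin n × Fin n} (hes : e ∈ s) (heu : e ∈ u) : s ⊆ u := by
  let S : ℕ → Prop := fun r => ∀ f ∈ s, f.1.val = p + r → f ∈ u
  have hstep : ∀ r, r + 1 < ℓ → (S r ↔ S (r + 1)) := by
    intro r hr
    obtain ⟨f, hf, hf₁, -⟩ := hs.exists_mem (r := r) (by omega)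
    obtain ⟨g, hg, hg₁, -⟩ := hs.exists_mem hr
    constructor
    · intro hSr g' hg' hg'₁
      exact hu f hf g' hg' (Or.inl (by omega)) (hSr f hf hf₁)
    · intro hSr f' hf' hf'₁
      exact hu g hg f' hf' (Or.inl (by omega)) (hSr g hg hg₁)
  obtain ⟨a, ha, he₁, -⟩ := (hs.2.2 e).1 hes
  have hSa : S a := fun f hf hf₁ => hu e hes f hf (Or.inl (by omega)) heu
  intro f hf
  obtain ⟨b, hb, hf₁, -⟩ := (hs.2.2 f).1 hf
  exact (Nat.iff_of_forall_succ_iff hstep ha hb).1 hSa f hf hf₁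

theorem exists_maximal_isRunAt_subset {M : Finset (Fin n × Fin n)} {e : Fin n × Fin n}
    (he : e ∈ M) :
    ∃ s L, 1 ≤ L ∧ IsRunAt s e.1.val e.2.val L ∧ s ⊆ M ∧
      ¬ ∃ f ∈ M, f.1.val = e.1.val + L ∧ f.2.val = e.2.val + L := by
  classical
  set p := e.1.val
  set q := e.2.val
  let Q : ℕ → Prop := fun ℓ => ∃ f ∈ M, f.1.val = p + ℓ ∧ f.2.val = q + ℓ
  have hQn : ∃ ℓ, ¬ Q ℓ := ⟨n, fun ⟨f, _, hf₁, _⟩ => by have := f.1.isLt; omega⟩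
  set L := Nat.find hQn
  have hQ : ∀ r < L, Q r := fun r hr => not_not.1 (Nat.find_min hQn hr)
  have hL : 1 ≤ L := (Nat.find_pos hQn).2 (not_not.2 ⟨e, he, rfl, rfl⟩)
  obtain ⟨g, -, hg₁, hg₂⟩ := hQ (L - 1) (by omega)
  have := g.1.isLt
  have := g.2.isLt
  refine ⟨M.filter fun f => ∃ r < L, f.1.val = p + r ∧ f.2.val = q + r, L, hL,
    ⟨by omega, by omega, fun f => ?_⟩, Finset.filter_subset _ _, Nat.find_spec hQn⟩
  refine ⟨fun hf => (Finset.mem_filter.1 hf).2, fun ⟨r, hr, hf₁, hf₂⟩ => ?_⟩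
  obtain ⟨f', hf', hf'₁, hf'₂⟩ := hQ r hr
  obtain rfl : f = f' := Prod.ext (Fin.ext (by omega)) (Fin.ext (by omega))
  exact Finset.mem_filter.2 ⟨hf', r, hr, hf₁, hf₂⟩

theorem ConsecMatching.mem_of_overlap_of_isRunAt {E M s : Finset (Fin n × Fin n)}
    {p q L : ℕ} (hM : ConsecMatching E M) (hs : IsRunAt s p q L) (hsM : s ⊆ M)
    (hbefore : ¬ ∃ f ∈ M, f.1.val + 1 = p ∧ f.2.val + 1 = q)
    (hafter : ¬ ∃ f ∈ M, f.1.val = p + L ∧ f.2.val = q + L)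
    {e e' : Fin n × Fin n} (he : e ∈ s) (he' : e' ∈ M) (h : Overlap e e') : e' ∈ s := by
  obtain ⟨r, hr, he₁, he₂⟩ := (hs.2.2 e).1 he
  rcases hM.eq_or_diag_adj_of_overlap (hsM he) he' h with rfl | ⟨h₁, h₂⟩ | ⟨h₁, h₂⟩
  · exact he
  · by_cases hrL : r + 1 < L
    · exact (hs.2.2 e').2 ⟨r + 1, hrL, by omega, by omega⟩
    · exact (hafter ⟨e', he', by omega, by omega⟩).elim
  · by_cases hr0 : r = 0
    · exact (hbefore ⟨e', he', by omega, by omega⟩).elim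
    · exact (hs.2.2 e').2 ⟨r - 1, by omega, by omega, by omega⟩

theorem ConsecMatching.exists_overlap_closed_run {E M : Finset (Fin n × Fin n)}
    (hM : ConsecMatching E M) (hne : M.Nonempty) :
    ∃ s, (∃ ℓ, 1 ≤ ℓ ∧ IsRun s ℓ) ∧ s ⊆ M ∧ s.Nonempty ∧
      ∀ e ∈ s, ∀ e' ∈ M, Overlap e e' → e' ∈ s := by
  obtain ⟨e, he, hmin⟩ := M.exists_min_image (fun f => f.1.val) hne
  obtain ⟨s, L, hL, hs, hsM, hafter⟩ := exists_maximal_isRunAt_subset he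
  have hbefore : ¬ ∃ f ∈ M, f.1.val + 1 = e.1.val ∧ f.2.val + 1 = e.2.val :=
    fun ⟨f, hf, hf₁, _⟩ => by have := hmin f hf; omega
  obtain ⟨f, hf, -⟩ := hs.exists_mem (r := 0) (by omega)
  exact ⟨s, ⟨L, hL, _, _, hs⟩, hsM, ⟨f, hf⟩,
    fun e he e' he' => hM.mem_of_overlap_of_isRunAt hs hsM hbefore hafter he he'⟩

namespace IsRunPartition

variable {M : Finset (Fin n × Fin n)} {P : Finset (Finset (Fin n × Fin n))}

theorem subset (hP : IsRunPartition M P) {t : Finset (Fin n × Fin n)} (ht : t ∈ P) : t ⊆ M :=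
  fun _ he => hP.2.1 ▸ Finset.mem_biUnion.2 ⟨t, ht, he⟩

theorem mem_of_overlap (hP : IsRunPartition M P) {t : Finset (Fin n × Fin n)} (ht : t ∈ P)
    {e e' : Fin n × Fin n} (he : e ∈ t) (he' : e' ∈ M) (h : Overlap e e') : e' ∈ t := by
  obtain ⟨t', ht', he't'⟩ := Finset.mem_biUnion.1 (hP.2.1 ▸ he' : e' ∈ P.biUnion id)
  by_contra he't
  exact hP.2.2 t ht t' ht' (fun htt' => he't (htt' ▸ he't')) e he e' he't' h

theorem insert {s : Finset (Fin n × Fin n)} (hP : IsRunPartition (M \ s) P)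
    (hs : ∃ ℓ, 1 ≤ ℓ ∧ IsRun s ℓ) (hsM : s ⊆ M)
    (hclosed : ∀ e ∈ s, ∀ e' ∈ M, Overlap e e' → e' ∈ s) :
    IsRunPartition M (Insert.insert s P) := by
  have hsep : ∀ t ∈ P, ∀ e ∈ s, ∀ e' ∈ t, ¬ Overlap e e' := fun t ht e he e' he' h =>
    (Finset.mem_sdiff.1 (hP.subset ht he')).2
      (hclosed e he e' (Finset.mem_sdiff.1 (hP.subset ht he')).1 h)
  refine ⟨?_, ?_, ?_⟩
  · simpa only [Finset.forall_mem_insert] using ⟨hs, hP.1⟩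
  · rw [Finset.biUnion_insert, hP.2.1, id, Finset.union_sdiff_of_subset hsM]
  · simp only [Finset.forall_mem_insert]
    exact ⟨⟨fun h => (h rfl).elim, fun t ht _ => hsep t ht⟩,
      fun t ht => ⟨fun _ e he e' he' h => hsep t ht e' he' e he h.symm, hP.2.2 t ht⟩⟩

theorem subset_of_isRunPartition {P' : Finset (Finset (Fin n × Fin n))}
    (hP : IsRunPartition M P) (hP' : IsRunPartition M P') : P ⊆ P' := by
  intro t ht
  obtain ⟨ℓ, hℓ, p, q, hrun⟩ := hP.1 t ht
  obtain ⟨e, he, -⟩ := hrun.exists_mem (r := 0) (by omega)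
  obtain ⟨t', ht', het'⟩ := Finset.mem_biUnion.1 (hP'.2.1 ▸ hP.subset ht he : e ∈ P'.biUnion id)
  obtain ⟨ℓ', -, p', q', hrun'⟩ := hP'.1 t' ht'
  have htt' : t ⊆ t' := hrun.subset_of_overlap_closed
    (fun _ _ g hg h hf => hP'.mem_of_overlap ht' hf (hP.subset ht hg) h) he het'
  have ht't : t' ⊆ t := hrun'.subset_of_overlap_closed
    (fun _ _ g hg h hf => hP.mem_of_overlap ht hf (hP'.subset ht' hg) h) het' he
  exact (htt'.antisymm ht't) ▸ ht'

end IsRunPartition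

theorem ConsecMatching.exists_isRunPartition {E M : Finset (Fin n × Fin n)}
    (hM : ConsecMatching E M) : ∃ P, IsRunPartition M P := by
  induction M using Finset.strongInduction with
  | H M ih =>
    rcases M.eq_empty_or_nonempty with rfl | hne
    · exact ⟨∅, by simp, by simp, by simp⟩
    obtain ⟨s, hs, hsM, hsne, hclosed⟩ := hM.exists_overlap_closed_run hne
    obtain ⟨P, hP⟩ := ih (M \ s) (Finset.sdiff_ssubset hsM hsne) (hM.mono_s4 Finset.sdiff_subset)
    exact ⟨_, hP.insert hs hsM hclosed⟩

end

theorem unique_streak_decomposition_general {n : ℕ}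
    (E M : Finset (Fin n × Fin n)) (hM : ConsecMatching E M) :
    ∃! P : Finset (Finset (Fin n × Fin n)),
      (∀ t ∈ P, ∃ ℓ, 1 ≤ ℓ ∧ IsRun t ℓ) ∧
      P.biUnion id = M ∧
      (∀ t ∈ P, ∀ t' ∈ P, t ≠ t' → ∀ e ∈ t, ∀ e' ∈ t', ¬ Overlap e e') := by
  obtain ⟨P, hP⟩ := hM.exists_isRunPartition
  exact ⟨P, hP, fun P' hP' => (IsRunPartition.subset_of_isRunPartition hP' hP).antisymm
    (IsRunPartition.subset_of_isRunPartition hP hP')⟩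

/-- every consecutive matching `M` in `E` can be uniquely partitioned
into runs of consecutive edges such that distinct parts do not overlap. -/
theorem unique_streak_decomposition {n : ℕ} (hn : 1 ≤ n)
    (E M : Finset (Fin n × Fin n)) (hM : ConsecMatching E M) :
    ∃! P : Finset (Finset (Fin n × Fin n)),
      (∀ t ∈ P, ∃ ℓ, 1 ≤ ℓ ∧ IsRun t ℓ) ∧
      P.biUnion id = M ∧
      (∀ t ∈ P, ∀ t' ∈ P, t ≠ t' → ∀ e ∈ t, ∀ e' ∈ t', ¬ Overlap e e') :=
  unique_streak_decomposition_general E M hM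
end

section
/- Suppose E contains no run of 2 consecutive edges, and let M be a consecutive matching in E. Then for any two distinct edges (i,j) and (i',j') of M one has ⌊i/2⌋ ≠ ⌊i'/2⌋ and ⌊j/2⌋ ≠ ⌊j'/2⌋ (indices taken as natural numbers). Consequently, merging the nodes of each side into consecutive pairs maps M injectively onto a matching of the same cardinality in the merged bipartite graph. -/
/-!
Two edges `(i, j)`, `(i + 1, j')` of a consecutive matching force `j' = j + 1`, and dually, so
they would form a run of two consecutive edges in `E`. Hence, without such runs, distinct edges
of the matching have first (and second) coordinates differing by at least two, and halving them
cannot identify two edges.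
-/

theorem isRunAt_pair {n : ℕ} {e e' : Fin n × Fin n}
    (h1 : e'.1.val = e.1.val + 1) (h2 : e'.2.val = e.2.val + 1) :
    IsRunAt {e, e'} e.1.val e.2.val 2 := by
  refine ⟨by omega, by omega, fun x => ?_⟩
  simp only [Finset.mem_insert, Finset.mem_singleton]
  constructor
  · rintro (rfl | rfl)
    · exact ⟨0, by omega, by omega, by omega⟩
    · exact ⟨1, by omega, by omega, by omega⟩
  · rintro ⟨r, hr, hx1, hx2⟩
    interval_cases r
    · exact Or.inl (Prod.ext (Fin.ext hx1) (Fin.ext hx2))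
    · exact Or.inr (Prod.ext (Fin.ext (by omega)) (Fin.ext (by omega)))

namespace ConsecMatching

variable {n : ℕ} {E M : Finset (Fin n × Fin n)} {e e' : Fin n × Fin n}

theorem fst_ne_succ (hE : NoRun E 2) (hM : ConsecMatching E M) (he : e ∈ M) (he' : e' ∈ M) :
    e'.1.val ≠ e.1.val + 1 := by
  intro h1
  have h2 : e'.2.val = e.2.val + 1 := hM.2.2.1 e he e' he' h1
  refine hE ⟨{e, e'}, ⟨_, _, isRunAt_pair h1 h2⟩, ?_⟩
  rw [Finset.insert_subset_iff, Finset.singleton_subset_iff]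
  exact ⟨hM.1 he, hM.1 he'⟩

theorem snd_ne_succ (hE : NoRun E 2) (hM : ConsecMatching E M) (he : e ∈ M) (he' : e' ∈ M) :
    e'.2.val ≠ e.2.val + 1 :=
  fun h2 => fst_ne_succ hE hM he he' (hM.2.2.2 e he e' he' h2)

theorem fst_div_two_ne (hE : NoRun E 2) (hM : ConsecMatching E M) (he : e ∈ M) (he' : e' ∈ M)
    (hne : e ≠ e') : e.1.val / 2 ≠ e'.1.val / 2 := by
  have hfst : e.1.val ≠ e'.1.val := Fin.val_ne_of_ne (hM.2.1 e he e' he' hne).1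
  have := fst_ne_succ hE hM he he'
  have := fst_ne_succ hE hM he' he
  omega

theorem snd_div_two_ne (hE : NoRun E 2) (hM : ConsecMatching E M) (he : e ∈ M) (he' : e' ∈ M)
    (hne : e ≠ e') : e.2.val / 2 ≠ e'.2.val / 2 := by
  have hsnd : e.2.val ≠ e'.2.val := Fin.val_ne_of_ne (hM.2.1 e he e' he' hne).2
  have := snd_ne_succ hE hM he he'
  have := snd_ne_succ hE hM he' he
  omega

end ConsecMatching

theorem merged_pairs_injective_general {n : ℕ}
    (E M : Finset (Fin n × Fin n)) (hE : NoRun E 2) (hM : ConsecMatching E M) :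
    (∀ e ∈ M, ∀ e' ∈ M, e ≠ e' →
      e.1.val / 2 ≠ e'.1.val / 2 ∧ e.2.val / 2 ≠ e'.2.val / 2) ∧
    (M.image (fun e => (e.1.val / 2, e.2.val / 2))).card = M.card := by
  refine ⟨fun e he e' he' hne =>
    ⟨hM.fst_div_two_ne hE he he' hne, hM.snd_div_two_ne hE he he' hne⟩, ?_⟩
  refine Finset.card_image_of_injOn fun e he e' he' h => ?_
  by_contra hne
  exact hM.fst_div_two_ne hE he he' hne (congrArg Prod.fst h)

/-- if `E` contains no run of 2 consecutive edges, then distinct edges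
of a consecutive matching `M` in `E` land in distinct merged pairs on both sides,
so merging nodes into consecutive pairs maps `M` injectively onto a matching of
the same cardinality in the merged bipartite graph. -/
theorem merged_pairs_injective {n : ℕ} (hn : 1 ≤ n)
    (E M : Finset (Fin n × Fin n)) (hE : NoRun E 2) (hM : ConsecMatching E M) :
    (∀ e ∈ M, ∀ e' ∈ M, e ≠ e' →
      e.1.val / 2 ≠ e'.1.val / 2 ∧ e.2.val / 2 ≠ e'.2.val / 2) ∧
    (M.image (fun e => (e.1.val / 2, e.2.val / 2))).card = M.card :=
  merged_pairs_injective_general E M hE hM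
end

section
/- Let M ⊆ Fin n × Fin n be a set of edges such that any two distinct edges (i,j) and (i',j') of M satisfy ⌊i/2⌋ ≠ ⌊i'/2⌋ and ⌊j/2⌋ ≠ ⌊j'/2⌋ (indices taken as natural numbers). Then there exists a subset S ⊆ M whose edges pairwise do not overlap (in particular S is a consecutive matching) such that 3·|S| ≥ |M|. -/
/-!
Greedy: pick any edge `e` of `M`, keep it, discard every edge overlapping it, and recurse.
Because distinct edges of `M` lie in distinct merged pairs `{2k, 2k+1}` on each side, an edge
other than `e` overlapping `e` on a side must sit at the unique index adjacent to `e` across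
the pair boundary, so at most one such edge per side exists: each step discards at most three
edges, including `e` itself.
-/

open Finset

theorem Finset.exists_pairwise_not_card_le_mul {α : Type*} [DecidableEq α] (r : α → α → Prop)
    [DecidableRel r] (hrefl : ∀ a, r a a)
    (hsymm : ∀ a b, r a b → r b a) (k : ℕ) (M : Finset α)
    (hk : ∀ e ∈ M, #(M.filter (r e)) ≤ k) :
    ∃ S ⊆ M, (S : Set α).Pairwise (fun a b => ¬ r a b) ∧ #M ≤ k * #S := by
  induction M using Finset.strongInduction with
  | H M ih =>
    rcases M.eq_empty_or_nonempty with rfl | ⟨e, he⟩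
    · exact ⟨∅, empty_subset _, by simp, by simp⟩
    set M' := M.filter (fun f => ¬ r e f)
    have hM'M : M' ⊆ M := filter_subset _ _
    have heM' : e ∉ M' := fun h => (mem_filter.mp h).2 (hrefl e)
    obtain ⟨S', hS'M', hS', hcard⟩ := ih M' (ssubset_of_subset_of_ne hM'M fun h => heM' (h ▸ he))
      fun f hf => (card_le_card (filter_subset_filter _ hM'M)).trans (hk f (hM'M hf))
    refine ⟨insert e S', insert_subset he (hS'M'.trans hM'M), ?_, ?_⟩
    · rw [coe_insert, Set.pairwise_insert]
      refine ⟨hS', fun f hf _ => ?_⟩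
      have hfe : ¬ r e f := (mem_filter.mp (hS'M' hf)).2
      exact ⟨hfe, fun h => hfe (hsymm f e h)⟩
    · rw [card_insert_of_notMem fun h => heM' (hS'M' h), mul_add_one]
      have hsplit : #(M.filter (r e)) + #M' = #M := card_filter_add_card_filter_not _
      have hke := hk e he
      omega

theorem Finset.card_filter_adjacent_other_pair_le_one {β : Type*} (M : Finset β) (x : β → ℕ)
    (hM : ∀ f ∈ M, ∀ g ∈ M, f ≠ g → x f / 2 ≠ x g / 2) (c : ℕ) :
    #(M.filter (fun f => x f / 2 ≠ c / 2 ∧ ((x f : ℤ) - c).natAbs ≤ 1)) ≤ 1 := by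
  rw [card_le_one]
  intro f hf g hg
  simp only [mem_filter] at hf hg
  by_contra hfg
  exact hM f hf.1 g hg.1 hfg (by omega)

section Overlap

variable {n : ℕ}

theorem overlap_refl (e : Fin n × Fin n) : Overlap e e := by
  unfold Overlap; omega

theorem overlap_symm {e f : Fin n × Fin n} (h : Overlap e f) : Overlap f e := by
  unfold Overlap at *; omega

theorem card_filter_overlap_le_three (M : Finset (Fin n × Fin n))
    (hM : ∀ e ∈ M, ∀ e' ∈ M, e ≠ e' →
      e.1.val / 2 ≠ e'.1.val / 2 ∧ e.2.val / 2 ≠ e'.2.val / 2)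
    {e : Fin n × Fin n} (he : e ∈ M) : #(M.filter (Overlap e)) ≤ 3 := by
  set A := M.filter (fun f => f.1.val / 2 ≠ e.1.val / 2 ∧ ((f.1.val : ℤ) - e.1.val).natAbs ≤ 1)
  set B := M.filter (fun f => f.2.val / 2 ≠ e.2.val / 2 ∧ ((f.2.val : ℤ) - e.2.val).natAbs ≤ 1)
  have hA : #A ≤ 1 := M.card_filter_adjacent_other_pair_le_one (fun f => f.1.val)
    (fun f hf g hg hfg => (hM f hf g hg hfg).1) _
  have hB : #B ≤ 1 := M.card_filter_adjacent_other_pair_le_one (fun f => f.2.val)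
    (fun f hf g hg hfg => (hM f hf g hg hfg).2) _
  have hsub : M.filter (Overlap e) ⊆ insert e (A ∪ B) := by
    intro f hf
    obtain ⟨hfM, hov⟩ := mem_filter.mp hf
    rcases eq_or_ne f e with rfl | hfe
    · exact mem_insert_self _ _
    obtain ⟨h1, h2⟩ := hM f hfM e he hfe
    unfold Overlap at hov
    refine mem_insert_of_mem (mem_union.mpr ?_)
    rcases hov with hov | hov
    · exact .inl (mem_filter.mpr ⟨hfM, h1, by omega⟩)
    · exact .inr (mem_filter.mpr ⟨hfM, h2, by omega⟩)
  calc #(M.filter (Overlap e)) ≤ #(insert e (A ∪ B)) := card_le_card hsub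
    _ ≤ #A + #B + 1 := (card_insert_le _ _).trans (by simpa using card_union_le A B)
    _ ≤ 3 := by omega

theorem consecMatching_of_pairwise_not_overlap {E S : Finset (Fin n × Fin n)} (hSE : S ⊆ E)
    (hS : (S : Set (Fin n × Fin n)).Pairwise (fun e e' => ¬ Overlap e e')) :
    ConsecMatching E S := by
  have hfar : ∀ e ∈ S, ∀ e' ∈ S, e ≠ e' →
      1 < ((e.1.val : ℤ) - e'.1.val).natAbs ∧ 1 < ((e.2.val : ℤ) - e'.2.val).natAbs :=
    fun e he e' he' hne => by simpa [Overlap, not_or] using hS he he' hne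
  refine ⟨hSE, fun e he e' he' hne => ?_, fun e he e' he' h => ?_, fun e he e' he' h => ?_⟩
  · have := hfar e he e' he' hne
    exact ⟨fun h => by simp [h] at this, fun h => by simp [h] at this⟩
  all_goals
    rcases eq_or_ne e e' with rfl | hne
    · omega
    · have := hfar e he e' he' hne
      omega

end Overlap

theorem third_of_merged_matching_general {n : ℕ}
    (M : Finset (Fin n × Fin n))
    (hM : ∀ e ∈ M, ∀ e' ∈ M, e ≠ e' →
      e.1.val / 2 ≠ e'.1.val / 2 ∧ e.2.val / 2 ≠ e'.2.val / 2) :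
    ∃ S ⊆ M, (∀ e ∈ S, ∀ e' ∈ S, e ≠ e' → ¬ Overlap e e') ∧
      ConsecMatching M S ∧ 3 * S.card ≥ M.card := by
  obtain ⟨S, hSM, hS, hcard⟩ := M.exists_pairwise_not_card_le_mul Overlap overlap_refl
    (fun _ _ => overlap_symm) 3 fun e he => card_filter_overlap_le_three M hM he
  exact ⟨S, hSM, hS, consecMatching_of_pairwise_not_overlap hSM hS, hcard⟩

/-- if distinct edges of `M` land in distinct merged pairs on both
sides, then `M` has a subset `S` of pairwise non-overlapping edges (in particular
`S` is a consecutive matching in `M`) with `3|S| ≥ |M|`. -/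
theorem third_of_merged_matching {n : ℕ} (hn : 1 ≤ n)
    (M : Finset (Fin n × Fin n))
    (hM : ∀ e ∈ M, ∀ e' ∈ M, e ≠ e' →
      e.1.val / 2 ≠ e'.1.val / 2 ∧ e.2.val / 2 ≠ e'.2.val / 2) :
    ∃ S ⊆ M, (∀ e ∈ S, ∀ e' ∈ S, e ≠ e' → ¬ Overlap e e') ∧
      ConsecMatching M S ∧ 3 * S.card ≥ M.card :=
  third_of_merged_matching_general M hM
end

section
/- Suppose E contains no run of 3 consecutive edges. Let O be a consecutive matching in E and let e ∈ E. Then at most 4 edges of O overlap e. -/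
/-!
Two edges of a consecutive matching whose first (or second) endpoints are adjacent are
diagonal neighbours `(i, j)`, `(i + 1, j + 1)`. Since endpoints in a matching are distinct, three
edges of `O` with first endpoints in `{a - 1, a, a + 1}` would form a run of three edges of `E`;
hence at most two edges of `O` meet each of the two "bands" around `e`, and at most four
overlap `e`.
-/

theorem NoRun.false_of_consecutive {n : ℕ} {E : Finset (Fin n × Fin n)} (hE : NoRun E 3)
    {f₀ f₁ f₂ : Fin n × Fin n} (h₀ : f₀ ∈ E) (h₁ : f₁ ∈ E) (h₂ : f₂ ∈ E)
    (h₀₁ : f₁.1.val = f₀.1.val + 1 ∧ f₁.2.val = f₀.2.val + 1)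
    (h₁₂ : f₂.1.val = f₁.1.val + 1 ∧ f₂.2.val = f₁.2.val + 1) : False := by
  refine hE ⟨{f₀, f₁, f₂}, ⟨f₀.1.val, f₀.2.val, by omega, by omega, fun g => ?_⟩,
    by simp [Finset.insert_subset_iff, h₀, h₁, h₂]⟩
  simp only [Finset.mem_insert, Finset.mem_singleton, Prod.ext_iff, Fin.ext_iff]
  constructor
  · rintro (h | h | h)
    exacts [⟨0, by omega⟩, ⟨1, by omega⟩, ⟨2, by omega⟩]
  · rintro ⟨r, hr, hg⟩
    interval_cases r <;> omega

theorem card_filter_natAbs_sub_le_two {n : ℕ} {E O : Finset (Fin n × Fin n)}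
    (hE : NoRun E 3) (hOE : O ⊆ E) (π : Fin n × Fin n → ℕ) (hπ : Set.InjOn π O)
    (hstep : ∀ f ∈ O, ∀ g ∈ O, π g = π f + 1 → g.1.val = f.1.val + 1 ∧ g.2.val = f.2.val + 1)
    (a : ℕ) : (O.filter fun f => ((π f : ℤ) - a).natAbs ≤ 1).card ≤ 2 := by
  by_contra! hcard
  set S := O.filter fun f => ((π f : ℤ) - a).natAbs ≤ 1
  have hSO : S ⊆ O := Finset.filter_subset _ _
  have hmaps : Set.MapsTo (fun f => (π f : ℤ)) S (Finset.Icc ((a : ℤ) - 1) (a + 1)) := by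
    intro f hf
    have := (Finset.mem_filter.1 hf).2
    simp only [Finset.coe_Icc, Set.mem_Icc]
    omega
  have hhit : ∀ x ∈ Finset.Icc ((a : ℤ) - 1) (a + 1), ∃ f ∈ S, (π f : ℤ) = x :=
    fun x hx => Finset.surjOn_of_injOn_of_card_le _ hmaps
      (fun f hf g hg hfg => hπ (hSO hf) (hSO hg) (Nat.cast_injective hfg))
      (by simp; omega) (Finset.mem_coe.2 hx)
  obtain ⟨f₀, hf₀, h₀⟩ := hhit (a - 1) (Finset.mem_Icc.2 ⟨le_rfl, by omega⟩)
  obtain ⟨f₁, hf₁, h₁⟩ := hhit a (Finset.mem_Icc.2 ⟨by omega, by omega⟩)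
  obtain ⟨f₂, hf₂, h₂⟩ := hhit (a + 1) (Finset.mem_Icc.2 ⟨by omega, le_rfl⟩)
  exact hE.false_of_consecutive (hOE (hSO hf₀)) (hOE (hSO hf₁)) (hOE (hSO hf₂))
    (hstep _ (hSO hf₀) _ (hSO hf₁) (by omega)) (hstep _ (hSO hf₁) _ (hSO hf₂) (by omega))

theorem overlap_bound_no_triples_general {n : ℕ}
    (E : Finset (Fin n × Fin n)) (hE : NoRun E 3)
    (O : Finset (Fin n × Fin n)) (hO : ConsecMatching E O)
    (e : Fin n × Fin n) :
    (O.filter (fun f => Overlap f e)).card ≤ 4 := by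
  obtain ⟨hOE, hdistinct, hstep₁, hstep₂⟩ := hO
  have hA := card_filter_natAbs_sub_le_two hE hOE (fun f => f.1.val)
    (fun f hf g hg hfg => by_contra fun hne => (hdistinct f hf g hg hne).1 (Fin.ext hfg))
    (fun f hf g hg h => ⟨h, hstep₁ f hf g hg h⟩) e.1.val
  have hB := card_filter_natAbs_sub_le_two hE hOE (fun f => f.2.val)
    (fun f hf g hg hfg => by_contra fun hne => (hdistinct f hf g hg hne).2 (Fin.ext hfg))
    (fun f hf g hg h => ⟨hstep₂ f hf g hg h, h⟩) e.2.val
  calc (O.filter (fun f => Overlap f e)).card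
      = (O.filter (fun f => ((f.1.val : ℤ) - e.1.val).natAbs ≤ 1) ∪
          O.filter (fun f => ((f.2.val : ℤ) - e.2.val).natAbs ≤ 1)).card := by
        rw [← Finset.filter_or]; rfl
    _ ≤ 4 := (Finset.card_union_le _ _).trans (by omega)

/-- if `E` contains no run of 3 consecutive edges, then at most 4
edges of a consecutive matching `O` in `E` overlap any given edge `e ∈ E`. -/
theorem overlap_bound_no_triples {n : ℕ} (hn : 1 ≤ n)
    (E : Finset (Fin n × Fin n)) (hE : NoRun E 3)
    (O : Finset (Fin n × Fin n)) (hO : ConsecMatching E O)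
    (e : Fin n × Fin n) (he : e ∈ E) :
    (O.filter (fun f => Overlap f e)).card ≤ 4 :=
  overlap_bound_no_triples_general E hE O hO e
end

section
/- Let k ≥ 1 and t ≥ k. Suppose E contains no run of k consecutive edges, let ALG be a t-locally-optimal consecutive matching in E, let OPT be any consecutive matching in E, and let s = {(p+r, q+r) : 0 ≤ r < ℓ} be a streak of OPT whose balance equals −2. Then s has at least two gaps; writing r₁ and r₂ for the least and the greatest index r such that (p+r, q+r) is a gap of s, the prefix {(p+r, q+r) : 0 ≤ r ≤ r₁} has balance −1, the suffix {(p+r, q+r) : r₂ ≤ r < ℓ} has balance −1, and the middle part {(p+r, q+r) : r₁ < r < r₂} has balance 0. -/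
/-- The credit of the endpoint slot at node `v` on side A of an `ALG` edge is
transferred to the `OPT` edge `e`:  if some `OPT` edge has its A-endpoint at `v`,
that edge gets the credit; otherwise, if exactly one of `v-1`, `v+1` is the
A-endpoint of an `OPT` edge, that edge gets the credit. -/
def TransfersA {n : ℕ} (OPT : Finset (Fin n × Fin n)) (v : ℕ) (e : Fin n × Fin n) : Prop :=
  e.1.val = v ∨
  ((∀ f ∈ OPT, f.1.val ≠ v) ∧
    ((e.1.val + 1 = v ∧ ∀ f ∈ OPT, f.1.val ≠ v + 1) ∨
     (e.1.val = v + 1 ∧ ∀ f ∈ OPT, f.1.val + 1 ≠ v)))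

/-- Side-B analogue of `TransfersA`. -/
def TransfersB {n : ℕ} (OPT : Finset (Fin n × Fin n)) (v : ℕ) (e : Fin n × Fin n) : Prop :=
  e.2.val = v ∨
  ((∀ f ∈ OPT, f.2.val ≠ v) ∧
    ((e.2.val + 1 = v ∧ ∀ f ∈ OPT, f.2.val ≠ v + 1) ∨
     (e.2.val = v + 1 ∧ ∀ f ∈ OPT, f.2.val + 1 ≠ v)))

instance {n : ℕ} (OPT : Finset (Fin n × Fin n)) (v : ℕ) (e : Fin n × Fin n) :
    Decidable (TransfersA OPT v e) := by unfold TransfersA; infer_instance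

instance {n : ℕ} (OPT : Finset (Fin n × Fin n)) (v : ℕ) (e : Fin n × Fin n) :
    Decidable (TransfersB OPT v e) := by unfold TransfersB; infer_instance

/-- The number of endpoint slots of `ALG` edges whose credit is transferred to `e`. -/
def credits {n : ℕ} (ALG OPT : Finset (Fin n × Fin n)) (e : Fin n × Fin n) : ℕ :=
  (ALG.filter (fun a => TransfersA OPT a.1.val e)).card +
  (ALG.filter (fun a => TransfersB OPT a.2.val e)).card

/-- The balance of a set `S` of `OPT` edges: total credits received minus `|S|`. -/
def balance {n : ℕ} (ALG OPT S : Finset (Fin n × Fin n)) : ℤ :=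
  (∑ e ∈ S, (credits ALG OPT e : ℤ)) - S.card


/-!
An edge that is not a gap receives at least one credit, so a set with `g` gaps has balance at
least `-g`; hence `s` has at least two gaps, and the prefix up to the first gap and the suffix
from the last gap, containing one gap each, have balance at least `-1`. The middle part `M` has
balance at least `0`: no `ALG` edge touches an endpoint of the two gaps, so the `ALG` edges with
an endpoint strictly between them can be swapped for `M`, which has fewer than `k ≤ t` edges
because `E` has no run of `k` edges. Local optimality bounds `|M|` by their number, and each of
them credits an edge of `M` directly. The three balances add up to `-2`, so all three bounds are
equalities.
-/

open Finset

variable {n : ℕ}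

def gaps (ALG OPT S : Finset (Fin n × Fin n)) : Finset (Fin n × Fin n) :=
  S.filter (fun e => credits ALG OPT e = 0)

section Balance

variable {ALG OPT : Finset (Fin n × Fin n)}

lemma balance_eq (T : Finset (Fin n × Fin n)) :
    balance ALG OPT T = ((∑ e ∈ T, credits ALG OPT e : ℕ) : ℤ) - T.card := by
  simp [balance]

lemma balance_union {T₁ T₂ : Finset (Fin n × Fin n)} (h : Disjoint T₁ T₂) :
    balance ALG OPT (T₁ ∪ T₂) = balance ALG OPT T₁ + balance ALG OPT T₂ := by
  simp only [balance, sum_union h, card_union_of_disjoint h]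
  push_cast
  ring

lemma balance_eq_add_add_of_lt (T : Finset (Fin n × Fin n)) {a b : ℕ} (hab : a < b) :
    balance ALG OPT T = balance ALG OPT (T.filter (fun e => e.1.val ≤ a)) +
      balance ALG OPT (T.filter (fun e => a < e.1.val ∧ e.1.val < b)) +
      balance ALG OPT (T.filter (fun e => b ≤ e.1.val)) := by
  rw [← balance_union (disjoint_filter.2 fun e _ h h' => by omega), filter_union_right,
    ← balance_union (disjoint_filter.2 fun e _ h h' => by omega), filter_union_right,
    filter_true_of_mem fun e _ => by omega]

lemma card_le_card_gaps_add_sum_credits (T : Finset (Fin n × Fin n)) :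
    T.card ≤ (gaps ALG OPT T).card + ∑ e ∈ T, credits ALG OPT e :=
  calc T.card = ∑ e ∈ T, 1 := card_eq_sum_ones T
    _ ≤ ∑ e ∈ T, ((if credits ALG OPT e = 0 then 1 else 0) + credits ALG OPT e) :=
        sum_le_sum fun e _ => by split_ifs <;> omega
    _ = _ := by rw [sum_add_distrib, gaps, card_filter]

lemma neg_card_gaps_le_balance (T : Finset (Fin n × Fin n)) :
    -((gaps ALG OPT T).card : ℤ) ≤ balance ALG OPT T := by
  have := card_le_card_gaps_add_sum_credits (ALG := ALG) (OPT := OPT) T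
  rw [balance_eq]
  omega

lemma ne_of_credits_eq_zero {e f : Fin n × Fin n} (he : credits ALG OPT e = 0) (hf : f ∈ ALG) :
    f.1.val ≠ e.1.val ∧ f.2.val ≠ e.2.val := by
  simp only [credits, Nat.add_eq_zero_iff, card_eq_zero, filter_eq_empty_iff] at he
  exact ⟨fun h => he.1 hf (Or.inl h.symm), fun h => he.2 hf (Or.inl h.symm)⟩

lemma card_le_sum_credits {X T : Finset (Fin n × Fin n)} (hX : X ⊆ ALG)
    (hcov : ∀ f ∈ X, (∃ e ∈ T, e.1 = f.1) ∨ ∃ e ∈ T, e.2 = f.2) :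
    X.card ≤ ∑ e ∈ T, credits ALG OPT e := by
  classical
  have hsub : X ⊆ T.biUnion (fun e => ALG.filter (fun a => TransfersA OPT a.1.val e)) ∪
      T.biUnion (fun e => ALG.filter (fun a => TransfersB OPT a.2.val e)) := by
    intro f hf
    rcases hcov f hf with ⟨e, he, hfe⟩ | ⟨e, he, hfe⟩
    · exact mem_union_left _ (mem_biUnion.2 ⟨e, he, mem_filter.2 ⟨hX hf, Or.inl (by rw [hfe])⟩⟩)
    · exact mem_union_right _ (mem_biUnion.2 ⟨e, he, mem_filter.2 ⟨hX hf, Or.inl (by rw [hfe])⟩⟩)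
  calc X.card ≤ _ := card_le_card hsub
    _ ≤ _ := card_union_le _ _
    _ ≤ _ := add_le_add card_biUnion_le card_biUnion_le
    _ = _ := by simp only [credits, sum_add_distrib]

end Balance

section Matching

variable {E ALG M N R : Finset (Fin n × Fin n)} {t : ℕ}

lemma ConsecMatching.mono_s13 (h : ConsecMatching E M) (hNM : N ⊆ M) : ConsecMatching E N :=
  ⟨hNM.trans h.1, fun e he e' he' => h.2.1 e (hNM he) e' (hNM he'),
    fun e he e' he' => h.2.2.1 e (hNM he) e' (hNM he'),
    fun e he e' he' => h.2.2.2 e (hNM he) e' (hNM he')⟩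

lemma ConsecMatching.union_of_forall_not_overlap (hN : ConsecMatching E N)
    (hM : ConsecMatching E M) (h : ∀ x ∈ N, ∀ y ∈ M, ¬ Overlap x y) :
    ConsecMatching E (N ∪ M) := by
  have h' : ∀ x ∈ N ∪ M, ∀ y ∈ N ∪ M, (x ∈ N ∧ y ∈ N) ∨ (x ∈ M ∧ y ∈ M) ∨ ¬ Overlap x y := by
    intro x hx y hy
    rcases mem_union.1 hx with hx | hx <;> rcases mem_union.1 hy with hy | hy
    · exact Or.inl ⟨hx, hy⟩
    · exact Or.inr (Or.inr (h x hx y hy))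
    · exact Or.inr (Or.inr fun hxy => h y hy x hx (by unfold Overlap at hxy ⊢; omega))
    · exact Or.inr (Or.inl ⟨hx, hy⟩)
  refine ⟨union_subset hN.1 hM.1, ?_, ?_, ?_⟩ <;> intro x hx y hy <;>
    rcases h' x hx y hy with ⟨hx, hy⟩ | ⟨hx, hy⟩ | hxy
  · exact hN.2.1 x hx y hy
  · exact hM.2.1 x hx y hy
  · unfold Overlap at hxy
    exact fun _ => ⟨Fin.ne_of_val_ne (by omega), Fin.ne_of_val_ne (by omega)⟩
  · exact hN.2.2.1 x hx y hy
  · exact hM.2.2.1 x hx y hy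
  · unfold Overlap at hxy
    omega
  · exact hN.2.2.2 x hx y hy
  · exact hM.2.2.2 x hx y hy
  · unfold Overlap at hxy
    omega

lemma LocallyOptimal.card_le_of_exchange (hALG : LocallyOptimal E ALG t) (hR : R ⊆ ALG)
    (hMR : M ∩ ALG ⊆ R) (hME : M ⊆ E) (hMt : M.card ≤ t)
    (hcm : ConsecMatching E (ALG \ R ∪ M)) : M.card ≤ R.card := by
  have hswap : ALG \ (R \ M) ∪ M \ ALG = ALG \ R ∪ M := by
    ext x
    simp only [mem_union, mem_sdiff]
    tauto
  have hadd : (M \ ALG).card ≤ (R \ M).card := by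
    by_contra! hlt
    exact hALG.2 ⟨R \ M, M \ ALG, sdiff_subset.trans hR, sdiff_subset_sdiff hME le_rfl, hlt,
      (card_le_card sdiff_subset).trans hMt, hswap ▸ hcm⟩
  have hinter : (M ∩ ALG).card ≤ (R ∩ M).card :=
    card_le_card fun x hx => mem_inter.2 ⟨hMR hx, (mem_inter.1 hx).1⟩
  have := card_sdiff_add_card_inter M ALG
  have := card_sdiff_add_card_inter R M
  omega

end Matching

lemma LocallyOptimal.card_le_sum_credits_of_window {E ALG OPT M : Finset (Fin n × Fin n)} {t : ℕ}
    (hALG : LocallyOptimal E ALG t) (hM : ConsecMatching E M) (hMt : M.card ≤ t)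
    {a₁ a₂ b₁ b₂ : ℕ}
    (hfree : ∀ f ∈ ALG, f.1.val ≠ a₁ ∧ f.1.val ≠ a₂ ∧ f.2.val ≠ b₁ ∧ f.2.val ≠ b₂)
    (hin : ∀ x ∈ M, a₁ < x.1.val ∧ x.1.val < a₂ ∧ b₁ < x.2.val ∧ x.2.val < b₂)
    (hcovA : ∀ i, a₁ < i → i < a₂ → ∃ e ∈ M, e.1.val = i)
    (hcovB : ∀ j, b₁ < j → j < b₂ → ∃ e ∈ M, e.2.val = j) :
    M.card ≤ ∑ e ∈ M, credits ALG OPT e := by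
  set R := ALG.filter fun f => (a₁ < f.1.val ∧ f.1.val < a₂) ∨ (b₁ < f.2.val ∧ f.2.val < b₂)
  -- `ALG \ R` misses the closed window, since no `ALG` edge uses its boundary nodes.
  have hsep : ∀ x ∈ ALG \ R, ∀ y ∈ M, ¬ Overlap x y := by
    intro x hx y hy
    obtain ⟨hxA, hxR⟩ := mem_sdiff.1 hx
    have := hfree x hxA
    have := hin y hy
    simp only [R, mem_filter, not_and, not_or] at hxR
    have := hxR hxA
    unfold Overlap
    omega
  have hcard : M.card ≤ R.card :=
    hALG.card_le_of_exchange (filter_subset _ _)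
      (fun x hx => mem_filter.2 ⟨(mem_inter.1 hx).2, Or.inl ⟨(hin x (mem_inter.1 hx).1).1,
        (hin x (mem_inter.1 hx).1).2.1⟩⟩)
      hM.1 hMt ((hALG.1.mono_s13 sdiff_subset).union_of_forall_not_overlap hM hsep)
  refine hcard.trans (card_le_sum_credits (filter_subset _ _) fun f hf => ?_)
  rcases (mem_filter.1 hf).2 with ⟨h₁, h₂⟩ | ⟨h₁, h₂⟩
  · obtain ⟨e, he, hef⟩ := hcovA _ h₁ h₂
    exact Or.inl ⟨e, he, Fin.ext hef⟩
  · obtain ⟨e, he, hef⟩ := hcovB _ h₁ h₂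
    exact Or.inr ⟨e, he, Fin.ext hef⟩

namespace IsRunAt

variable {s : Finset (Fin n × Fin n)} {p q ℓ : ℕ}

lemma of_mem (h : IsRunAt s p q ℓ) {e : Fin n × Fin n} (he : e ∈ s) :
    p ≤ e.1.val ∧ e.1.val < p + ℓ ∧ e.2.val + p = e.1.val + q := by
  obtain ⟨r, hr, h₁, h₂⟩ := (h.2.2 e).1 he
  omega

lemma fst_injOn (h : IsRunAt s p q ℓ) : Set.InjOn (fun e : Fin n × Fin n => e.1.val) s := by
  intro e he e' he' hee'
  have := h.of_mem he
  have := h.of_mem he'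
  simp only at hee'
  exact Prod.ext (Fin.ext hee') (Fin.ext (by omega))

lemma card_le (h : IsRunAt s p q ℓ) : s.card ≤ ℓ := by
  simpa using card_le_card_of_injOn (fun e : Fin n × Fin n => e.1.val - p) (t := range ℓ)
    (fun e he => by have := h.of_mem he; simp only [coe_range, Set.mem_Iio]; omega)
    (fun e he e' he' hee' => h.fst_injOn he he' (by
      have := h.of_mem he; have := h.of_mem he'; simp only at hee' ⊢; omega))

lemma exists_mem_fst_eq (h : IsRunAt s p q ℓ) {i : ℕ} (hpi : p ≤ i) (hi : i < p + ℓ) :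
    ∃ e ∈ s, e.1.val = i := by
  obtain ⟨hp, hq, hmem⟩ := h
  exact ⟨(⟨i, by omega⟩, ⟨q + (i - p), by omega⟩),
    (hmem _).2 ⟨i - p, by omega, by simp only; omega, rfl⟩, rfl⟩

lemma exists_mem_snd_eq (h : IsRunAt s p q ℓ) {j : ℕ} (hqj : q ≤ j) (hj : j < q + ℓ) :
    ∃ e ∈ s, e.2.val = j := by
  obtain ⟨hp, hq, hmem⟩ := h
  exact ⟨(⟨p + (j - q), by omega⟩, ⟨j, by omega⟩),
    (hmem _).2 ⟨j - q, by omega, rfl, by simp only; omega⟩, rfl⟩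

lemma filter_fst_lt (h : IsRunAt s p q ℓ) {m : ℕ} (hm : m ≤ ℓ) :
    IsRunAt (s.filter fun e => e.1.val < p + m) p q m := by
  refine ⟨by have := h.1; omega, by have := h.2.1; omega, fun e => ?_⟩
  rw [mem_filter, h.2.2]
  constructor
  · rintro ⟨⟨r, -, h₁, h₂⟩, hlt⟩
    exact ⟨r, by omega, h₁, h₂⟩
  · rintro ⟨r, hr, h₁, h₂⟩
    exact ⟨⟨r, by omega, h₁, h₂⟩, by omega⟩

end IsRunAt

lemma NoRun.lt_of_isRunAt {E s : Finset (Fin n × Fin n)} {k p q ℓ : ℕ} (hE : NoRun E k)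
    (hrun : IsRunAt s p q ℓ) (hsE : s ⊆ E) : ℓ < k := by
  by_contra! hkℓ
  exact hE ⟨_, ⟨p, q, hrun.filter_fst_lt hkℓ⟩, (filter_subset _ _).trans hsE⟩

lemma balance_filter_between_nonneg {E ALG OPT s : Finset (Fin n × Fin n)} {t p q ℓ : ℕ}
    (hALG : LocallyOptimal E ALG t) (hOPT : ConsecMatching E OPT) (hrun : IsRunAt s p q ℓ)
    (hsOPT : s ⊆ OPT) (hst : s.card ≤ t) {e₁ e₂ : Fin n × Fin n} (he₁ : e₁ ∈ s) (he₂ : e₂ ∈ s)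
    (h₁ : credits ALG OPT e₁ = 0) (h₂ : credits ALG OPT e₂ = 0) :
    0 ≤ balance ALG OPT (s.filter fun e => e₁.1.val < e.1.val ∧ e.1.val < e₂.1.val) := by
  set M := s.filter fun e => e₁.1.val < e.1.val ∧ e.1.val < e₂.1.val
  have hrun₁ := hrun.of_mem he₁
  have hrun₂ := hrun.of_mem he₂
  have hMs : M ⊆ s := filter_subset _ _
  have hin : ∀ x ∈ M, e₁.1.val < x.1.val ∧ x.1.val < e₂.1.val ∧
      e₁.2.val < x.2.val ∧ x.2.val < e₂.2.val := by
    intro x hx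
    have := hrun.of_mem (hMs hx)
    have := (mem_filter.1 hx).2
    omega
  have hcovA : ∀ i, e₁.1.val < i → i < e₂.1.val → ∃ e ∈ M, e.1.val = i := by
    intro i hi₁ hi₂
    obtain ⟨e, he, rfl⟩ := hrun.exists_mem_fst_eq (i := i) (by omega) (by omega)
    exact ⟨e, mem_filter.2 ⟨he, hi₁, hi₂⟩, rfl⟩
  have hcovB : ∀ j, e₁.2.val < j → j < e₂.2.val → ∃ e ∈ M, e.2.val = j := by
    intro j hj₁ hj₂
    obtain ⟨e, he, rfl⟩ := hrun.exists_mem_snd_eq (j := j) (by omega) (by omega)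
    have := hrun.of_mem he
    exact ⟨e, mem_filter.2 ⟨he, by omega, by omega⟩, rfl⟩
  have hfree : ∀ f ∈ ALG, f.1.val ≠ e₁.1.val ∧ f.1.val ≠ e₂.1.val ∧
      f.2.val ≠ e₁.2.val ∧ f.2.val ≠ e₂.2.val := fun f hf =>
    let ⟨h₁₁, h₁₂⟩ := ne_of_credits_eq_zero h₁ hf
    let ⟨h₂₁, h₂₂⟩ := ne_of_credits_eq_zero h₂ hf
    ⟨h₁₁, h₂₁, h₁₂, h₂₂⟩
  have := hALG.card_le_sum_credits_of_window (OPT := OPT) (hOPT.mono_s13 (hMs.trans hsOPT))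
    ((card_le_card hMs).trans hst) hfree hin hcovA hcovB
  rw [balance_eq]
  omega

lemma IsRunAt.fst_lt_of_one_lt_card {s T : Finset (Fin n × Fin n)} {p q ℓ : ℕ}
    (hrun : IsRunAt s p q ℓ) (hT : T ⊆ s) (hcard : 1 < T.card) {e₁ e₂ : Fin n × Fin n}
    (hmin : ∀ e ∈ T, e₁.1.val ≤ e.1.val) (hmax : ∀ e ∈ T, e.1.val ≤ e₂.1.val) :
    e₁.1.val < e₂.1.val := by
  obtain ⟨g, hg, g', hg', hne⟩ := one_lt_card.1 hcard
  have : g.1.val ≠ g'.1.val := fun h => hne (hrun.fst_injOn (hT hg) (hT hg') h)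
  have := hmin g hg
  have := hmin g' hg'
  have := hmax g hg
  have := hmax g' hg'
  omega

lemma IsRunAt.neg_one_le_balance_filter {ALG OPT s : Finset (Fin n × Fin n)} {p q ℓ : ℕ}
    (hrun : IsRunAt s p q ℓ) {P : Fin n × Fin n → Prop} [DecidablePred P] {a : ℕ}
    (h : ∀ e ∈ s, credits ALG OPT e = 0 → P e → e.1.val = a) :
    -1 ≤ balance ALG OPT (s.filter P) := by
  have hle : (gaps ALG OPT (s.filter P)).card ≤ 1 := by
    refine card_le_one.2 fun e he e' he' => ?_
    simp only [gaps, mem_filter] at he he'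
    exact hrun.fst_injOn he.1.1 he'.1.1
      ((h e he.1.1 he.2 he.1.2).trans (h e' he'.1.1 he'.2 he'.1.2).symm)
  have := neg_card_gaps_le_balance (ALG := ALG) (OPT := OPT) (s.filter P)
  omega

theorem balance_neg_two_split_general {n : ℕ}
    (E : Finset (Fin n × Fin n)) (k t : ℕ) (ht : k ≤ t)
    (hE : NoRun E k)
    (ALG OPT : Finset (Fin n × Fin n))
    (hALG : LocallyOptimal E ALG t) (hOPT : ConsecMatching E OPT)
    (s : Finset (Fin n × Fin n)) (p q ℓ : ℕ) (hrun : IsRunAt s p q ℓ)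
    (hs : IsStreak OPT s) (hbal : balance ALG OPT s = -2) :
    2 ≤ (s.filter (fun e => credits ALG OPT e = 0)).card ∧
    ∀ e₁ ∈ s, ∀ e₂ ∈ s,
      credits ALG OPT e₁ = 0 → credits ALG OPT e₂ = 0 →
      (∀ e ∈ s, credits ALG OPT e = 0 → e₁.1.val ≤ e.1.val) →
      (∀ e ∈ s, credits ALG OPT e = 0 → e.1.val ≤ e₂.1.val) →
      balance ALG OPT (s.filter (fun e => e.1.val ≤ e₁.1.val)) = -1 ∧
      balance ALG OPT (s.filter (fun e => e₂.1.val ≤ e.1.val)) = -1 ∧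
      balance ALG OPT (s.filter (fun e => e₁.1.val < e.1.val ∧ e.1.val < e₂.1.val)) = 0 := by
  have hsOPT : s ⊆ OPT := hs.2.1
  have hst : s.card ≤ t := by
    have := hrun.card_le
    have := hE.lt_of_isRunAt hrun (hsOPT.trans hOPT.1)
    omega
  have hgaps : 2 ≤ (gaps ALG OPT s).card := by
    have := neg_card_gaps_le_balance (ALG := ALG) (OPT := OPT) s
    omega
  refine ⟨hgaps, fun e₁ he₁ e₂ he₂ h₁ h₂ hmin hmax => ?_⟩
  have hgap : ∀ e ∈ gaps ALG OPT s, e ∈ s ∧ credits ALG OPT e = 0 := fun e => mem_filter.1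
  have hlt : e₁.1.val < e₂.1.val :=
    hrun.fst_lt_of_one_lt_card (fun e he => (hgap e he).1) hgaps
      (fun e he => hmin e (hgap e he).1 (hgap e he).2)
      (fun e he => hmax e (hgap e he).1 (hgap e he).2)
  have hpre := hrun.neg_one_le_balance_filter (P := fun e => e.1.val ≤ e₁.1.val)
    fun e he hc hle => le_antisymm hle (hmin e he hc)
  have hsuf := hrun.neg_one_le_balance_filter (P := fun e => e₂.1.val ≤ e.1.val)
    fun e he hc hle => le_antisymm (hmax e he hc) hle
  have hmid := balance_filter_between_nonneg hALG hOPT hrun hsOPT hst he₁ he₂ h₁ h₂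
  have hsplit := balance_eq_add_add_of_lt (ALG := ALG) (OPT := OPT) s hlt
  omega

/-- under the hypotheses of Statement 12, every streak
`s = {(p+r, q+r) : 0 ≤ r < ℓ}` of `OPT` with balance `-2` has at least two gaps,
and letting `e₁` and `e₂` be its first and last gaps, the prefix of `s` up to `e₁`
has balance `-1`, the suffix of `s` from `e₂` on has balance `-1`, and the middle
part strictly between `e₁` and `e₂` has balance `0`. -/
theorem balance_neg_two_split {n : ℕ} (hn : 1 ≤ n)
    (E : Finset (Fin n × Fin n)) (k t : ℕ) (hk : 1 ≤ k) (ht : k ≤ t)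
    (hE : NoRun E k)
    (ALG OPT : Finset (Fin n × Fin n))
    (hALG : LocallyOptimal E ALG t) (hOPT : ConsecMatching E OPT)
    (s : Finset (Fin n × Fin n)) (p q ℓ : ℕ) (hrun : IsRunAt s p q ℓ)
    (hs : IsStreak OPT s) (hbal : balance ALG OPT s = -2) :
    2 ≤ (s.filter (fun e => credits ALG OPT e = 0)).card ∧
    ∀ e₁ ∈ s, ∀ e₂ ∈ s,
      credits ALG OPT e₁ = 0 → credits ALG OPT e₂ = 0 →
      (∀ e ∈ s, credits ALG OPT e = 0 → e₁.1.val ≤ e.1.val) →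
      (∀ e ∈ s, credits ALG OPT e = 0 → e.1.val ≤ e₂.1.val) →
      balance ALG OPT (s.filter (fun e => e.1.val ≤ e₁.1.val)) = -1 ∧
      balance ALG OPT (s.filter (fun e => e₂.1.val ≤ e.1.val)) = -1 ∧
      balance ALG OPT (s.filter (fun e => e₁.1.val < e.1.val ∧ e.1.val < e₂.1.val)) = 0 :=
  balance_neg_two_split_general E k t ht hE ALG OPT hALG hOPT s p q ℓ hrun hs hbal
end
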